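/- arXiv:2303.01506 — 14 statements merged into one kernel-verified Lean document; each statement's English description precedes it below -/
import Mathlib

section
/- Let f : ℝⁿ → ℝ be a multivariate polynomial, b ∈ ℝⁿ a baseline point and x ∈ ℝⁿ an input. For every subset T ⊆ N, the output on the masked input satisfies the faithfulness identity f(x_T) = f(b) + ∑_{∅ ≠ S ⊆ T} J(S). -/
open Finset

/-- For a polynomial `f : ℝⁿ → ℝ` with expansion `q` in powers of `x − b`,
the output on any masked input `x_T` satisfies the faithfulness identity
`f(x_T) = f(b) + ∑_{∅ ≠ S ⊆ T} J(S)`. -/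
theorem faithfulness_masked {n : ℕ} (hn : 1 ≤ n) (f : (Fin n → ℝ) → ℝ)
    (q : MvPolynomial (Fin n) ℝ) (b x : Fin n → ℝ)
    (hf : ∀ y : Fin n → ℝ,
      f y = ∑ κ ∈ q.support, MvPolynomial.coeff κ q * ∏ i, (y i - b i) ^ κ i)
    (T : Finset (Fin n)) :
    f (fun i => if i ∈ T then x i else b i)
      = f b
        + ∑ S ∈ T.powerset.filter (fun S => S.Nonempty),
            ∑ κ ∈ q.support.filter (fun κ => κ.support = S),
              MvPolynomial.coeff κ q * ∏ j, (x j - b j) ^ κ j := by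
  rw [hf, hf]
  set F : (Fin n →₀ ℕ) → ℝ := fun κ => MvPolynomial.coeff κ q * ∏ j, (x j - b j) ^ κ j with hF
  have hL : ∀ κ ∈ q.support,
      MvPolynomial.coeff κ q * ∏ i, ((if i ∈ T then x i else b i) - b i) ^ κ i
        = if κ.support ⊆ T then F κ else 0 := by
    intro κ _
    by_cases h : κ.support ⊆ T
    · simp only [h, if_true, hF]
      congr 1
      apply Finset.prod_congr rfl
      intro i _
      by_cases hi : i ∈ T
      · simp [hi]
      · have hz : κ i = 0 := by
          by_contra hne
          exact hi (h (Finsupp.mem_support_iff.2 hne))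
        simp [hz]
    · simp only [h, if_false]
      obtain ⟨i, hiS, hiT⟩ := Finset.not_subset.1 h
      have hki : κ i ≠ 0 := Finsupp.mem_support_iff.1 hiS
      have hz : ((if i ∈ T then x i else b i) - b i) ^ κ i = 0 := by
        simp [hiT, zero_pow hki]
      rw [Finset.prod_eq_zero (Finset.mem_univ i) hz, mul_zero]
  have hB : ∀ κ ∈ q.support,
      MvPolynomial.coeff κ q * ∏ i, (b i - b i) ^ κ i
        = if κ.support = ∅ then F κ else 0 := by
    intro κ _
    by_cases h : κ.support = ∅
    · have hκ : κ = 0 := Finsupp.support_eq_empty.1 h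
      simp [h, hF, hκ]
    · obtain ⟨i, hiS⟩ := Finset.nonempty_iff_ne_empty.2 h
      have hki : κ i ≠ 0 := Finsupp.mem_support_iff.1 hiS
      have hz : (b i - b i) ^ κ i = 0 := by simp [zero_pow hki]
      rw [if_neg h, Finset.prod_eq_zero (Finset.mem_univ i) hz, mul_zero]
  rw [Finset.sum_congr rfl hL, Finset.sum_congr rfl hB, ← Finset.sum_filter, ← Finset.sum_filter]
  rw [← Finset.sum_filter_add_sum_filter_not (q.support.filter fun κ => κ.support ⊆ T)
      (fun κ => κ.support = ∅) F]
  congr 1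
  · rw [Finset.filter_filter]
    apply Finset.sum_congr _ (fun _ _ => rfl)
    apply Finset.filter_congr
    intro κ _
    have : κ.support = ∅ → κ.support ⊆ T := by intro h; simp [h]
    tauto
  · rw [Finset.filter_filter]
    rw [← Finset.sum_fiberwise_of_maps_to (g := fun κ : Fin n →₀ ℕ => κ.support)
      (t := T.powerset.filter fun S => S.Nonempty) ?_ F]
    · apply Finset.sum_congr rfl
      intro S hS
      simp only [Finset.mem_filter, Finset.mem_powerset] at hS
      apply Finset.sum_congr _ (fun _ _ => rfl)
      rw [Finset.filter_filter]
      apply Finset.filter_congr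
      intro κ _
      have : κ.support = S → κ.support ⊆ T ∧ ¬κ.support = ∅ := by
        intro h
        rw [h]
        exact ⟨hS.1, Finset.nonempty_iff_ne_empty.1 hS.2⟩
      tauto
    · intro κ hκ
      simp only [Finset.mem_filter] at hκ
      simp only [Finset.mem_filter, Finset.mem_powerset]
      exact ⟨hκ.2.1, Finset.nonempty_iff_ne_empty.2 hκ.2.2⟩
end

section
/- Let f : ℝⁿ → ℝ be a multivariate polynomial, b ∈ ℝⁿ a baseline point and x ∈ ℝⁿ an input. For every subset S ⊆ N with |S| > 1, the Harsanyi dividend equals the generic interaction effect: H(S) := ∑_{T ⊆ S} (−1)^{|S|−|T|} f(x_T) = J(S) = ∑_{κ ∈ Ω_S} I(κ). -/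
open Finset

lemma mobius_aux {α : Type*} [DecidableEq α] (K S : Finset α) (hKS : K ⊆ S) :
    ∑ T ∈ S.powerset.filter (fun T => K ⊆ T), (-1:ℝ)^(S.card - T.card)
      = if K = S then 1 else 0 := by
  have hbij : ∑ T ∈ S.powerset.filter (fun T => K ⊆ T), (-1:ℝ)^(S.card - T.card)
      = ∑ U ∈ (S \ K).powerset, (-1:ℝ)^((S \ K).card - U.card) := by
    refine Finset.sum_bij' (fun T _ => T \ K) (fun U _ => U ∪ K) ?_ ?_ ?_ ?_ ?_
    · intro T hT
      simp only [mem_filter, mem_powerset] at hT ⊢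
      exact sdiff_subset_sdiff hT.1 le_rfl
    · intro U hU
      simp only [mem_powerset] at hU
      simp only [mem_filter, mem_powerset]
      constructor
      · exact union_subset (hU.trans sdiff_subset) hKS
      · exact subset_union_right
    · intro T hT
      simp only [mem_filter, mem_powerset] at hT
      exact sdiff_union_of_subset hT.2
    · intro U hU
      simp only [mem_powerset] at hU
      show (U ∪ K) \ K = U
      rw [union_sdiff_right, Finset.sdiff_eq_self_iff_disjoint]
      exact Finset.disjoint_of_subset_left hU sdiff_disjoint
    · intro T hT
      simp only [mem_filter, mem_powerset] at hT
      show (-1:ℝ)^(S.card - T.card) = (-1:ℝ)^((S \ K).card - (T \ K).card)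
      congr 1
      have h1 : (T \ K).card = T.card - K.card := card_sdiff_of_subset hT.2
      have h2 : (S \ K).card = S.card - K.card := card_sdiff_of_subset hKS
      have hKT := card_le_card hT.2
      have hTS := card_le_card hT.1
      omega
  rw [hbij]
  have : ∀ U ∈ (S \ K).powerset, (-1:ℝ)^((S \ K).card - U.card)
      = (-1:ℝ)^(S \ K).card * (-1:ℝ)^U.card := by
    intro U hU
    have hU' := card_le_card (mem_powerset.mp hU)
    rw [← pow_add, show (S \ K).card + U.card = ((S \ K).card - U.card) + 2 * U.card from by
      omega, pow_add, pow_mul, neg_one_sq, one_pow, mul_one]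
  have hcast : (∑ U ∈ (S \ K).powerset, (-1:ℝ)^U.card) = if S \ K = ∅ then 1 else 0 := by
    have := @Finset.sum_powerset_neg_one_pow_card α _ (S \ K)
    exact_mod_cast congrArg (Int.cast : ℤ → ℝ) this
  rw [Finset.sum_congr rfl this, ← Finset.mul_sum, hcast]
  by_cases h : K = S
  · simp [h]
  · have : S \ K ≠ ∅ := by
      intro hc
      exact h (Finset.Subset.antisymm hKS (by simpa [Finset.sdiff_eq_empty_iff_subset] using hc))
    simp [this, h]

/-- For a polynomial `f : ℝⁿ → ℝ` with expansion `q` in powers of `x − b`,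
for every `S ⊆ N` with `|S| > 1`, the Harsanyi dividend
`H(S) = ∑_{T ⊆ S} (−1)^{|S|−|T|} f(x_T)` equals the generic interaction effect
`J(S) = ∑_{κ ∈ Ω_S} I(κ)`. -/
theorem harsanyi_eq_generic_interaction {n : ℕ} (hn : 1 ≤ n) (f : (Fin n → ℝ) → ℝ)
    (q : MvPolynomial (Fin n) ℝ) (b x : Fin n → ℝ)
    (hf : ∀ y : Fin n → ℝ,
      f y = ∑ κ ∈ q.support, MvPolynomial.coeff κ q * ∏ i, (y i - b i) ^ κ i)
    (S : Finset (Fin n)) (hS : 1 < S.card) :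
    ∑ T ∈ S.powerset,
        (-1 : ℝ) ^ (S.card - T.card) * f (fun i => if i ∈ T then x i else b i)
      = ∑ κ ∈ q.support.filter (fun κ => κ.support = S),
          MvPolynomial.coeff κ q * ∏ j, (x j - b j) ^ κ j := by
  simp_rw [hf, Finset.mul_sum]
  rw [Finset.sum_comm, Finset.sum_filter]
  refine Finset.sum_congr rfl fun κ _ => ?_
  have hprod : ∀ T : Finset (Fin n),
      (∏ i, ((if i ∈ T then x i else b i) - b i) ^ κ i)
        = if κ.support ⊆ T then ∏ j, (x j - b j) ^ κ j else 0 := by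
    intro T
    by_cases h : κ.support ⊆ T
    · rw [if_pos h]
      refine Finset.prod_congr rfl fun i _ => ?_
      by_cases hi : i ∈ T
      · simp [hi]
      · have : κ i = 0 := by
          by_contra hk
          exact hi (h (Finsupp.mem_support_iff.mpr hk))
        simp [hi, this]
    · rw [if_neg h]
      obtain ⟨i, hiK, hiT⟩ := Finset.not_subset.mp h
      refine Finset.prod_eq_zero (Finset.mem_univ i) ?_
      have : κ i ≠ 0 := Finsupp.mem_support_iff.mp hiK
      simp [hiT, zero_pow this]
  simp_rw [hprod, mul_ite, mul_zero]
  rw [← Finset.sum_filter, ← Finset.sum_mul]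
  by_cases hsub : κ.support ⊆ S
  · rw [mobius_aux _ _ hsub]
    by_cases heq : κ.support = S <;> simp [heq]
  · have hempty : S.powerset.filter (fun T => κ.support ⊆ T) = ∅ := by
      rw [Finset.filter_eq_empty_iff]
      intro T hT hK
      exact hsub (hK.trans (Finset.mem_powerset.mp hT))
    have hne : κ.support ≠ S := fun h => hsub (h ▸ le_rfl)
    simp [hempty, hne]
end

section
/- Let f : ℝⁿ → ℝ be a multivariate polynomial, b ∈ ℝⁿ a baseline point and x ∈ ℝⁿ an input. For every i ∈ N, the Occlusion-1 attribution, i.e. the output change when variable i is occluded by its baseline value, satisfies f(x) − f(x restricted with x_i replaced by b_i) = ∑_{κ ∈ Ω_i} φ(κ) + ∑_{S ⊆ N, |S| > 1, i ∈ S} ∑_{κ ∈ Ω_S} I(κ). -/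
open Finset

/-- For a polynomial `f : ℝⁿ → ℝ` with expansion `q` in powers of `x − b`,
the Occlusion-1 attribution of variable `i` satisfies
`f(x) − f(x|_{x_i = b_i}) = ∑_{κ ∈ Ω_i} φ(κ) + ∑_{|S|>1, i ∈ S} ∑_{κ ∈ Ω_S} I(κ)`. -/
theorem occlusion_one {n : ℕ} (hn : 1 ≤ n) (f : (Fin n → ℝ) → ℝ)
    (q : MvPolynomial (Fin n) ℝ) (b x : Fin n → ℝ)
    (hf : ∀ y : Fin n → ℝ,
      f y = ∑ κ ∈ q.support, MvPolynomial.coeff κ q * ∏ i, (y i - b i) ^ κ i)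
    (i : Fin n) :
    f x - f (Function.update x i (b i))
      = (∑ κ ∈ q.support.filter (fun κ => κ.support = {i}),
            MvPolynomial.coeff κ q * ∏ j, (x j - b j) ^ κ j)
        + ∑ S ∈ (univ : Finset (Fin n)).powerset.filter (fun S => 1 < S.card ∧ i ∈ S),
            ∑ κ ∈ q.support.filter (fun κ => κ.support = S),
              MvPolynomial.coeff κ q * ∏ j, (x j - b j) ^ κ j := by
  classical
  set g : (Fin n →₀ ℕ) → ℝ := fun κ => MvPolynomial.coeff κ q * ∏ j, (x j - b j) ^ κ j with hg
  have lhs : f x - f (Function.update x i (b i))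
      = ∑ κ ∈ q.support.filter (fun κ => i ∈ κ.support), g κ := by
    rw [hf, hf, ← Finset.sum_sub_distrib, Finset.sum_filter]
    refine Finset.sum_congr rfl fun κ _ => ?_
    by_cases hi : i ∈ κ.support
    · rw [if_pos hi]
      have h0 : (∏ j, (Function.update x i (b i) j - b j) ^ κ j) = 0 := by
        apply Finset.prod_eq_zero (Finset.mem_univ i)
        simp [Finsupp.mem_support_iff.mp hi]
      rw [h0, mul_zero, sub_zero, hg]
    · rw [if_neg hi]
      have : (∏ j, (Function.update x i (b i) j - b j) ^ κ j)
          = ∏ j, (x j - b j) ^ κ j := by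
        refine Finset.prod_congr rfl fun j _ => ?_
        by_cases hj : j = i
        · subst hj
          have : κ j = 0 := Finsupp.notMem_support_iff.mp hi
          simp [this]
        · rw [Function.update_of_ne hj]
      rw [this, sub_self]
  rw [lhs]
  have fiber : ∑ κ ∈ q.support.filter (fun κ => i ∈ κ.support), g κ
      = ∑ S ∈ (univ : Finset (Fin n)).powerset.filter (fun S => i ∈ S),
          ∑ κ ∈ q.support.filter (fun κ => κ.support = S), g κ := by
    rw [← Finset.sum_fiberwise_of_maps_to (g := fun κ => κ.support)
        (t := (univ : Finset (Fin n)).powerset.filter (fun S => i ∈ S))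
        (fun κ hκ => by
          simp only [Finset.mem_filter] at hκ ⊢
          exact ⟨Finset.mem_powerset.mpr (Finset.subset_univ _), hκ.2⟩)]
    refine Finset.sum_congr rfl fun S hS => ?_
    simp only [Finset.mem_filter, Finset.mem_powerset] at hS
    refine Finset.sum_congr ?_ fun _ _ => rfl
    rw [Finset.filter_filter]
    refine Finset.filter_congr fun κ _ => ?_
    constructor
    · rintro ⟨-, h⟩; exact h
    · rintro rfl; exact ⟨hS.2, rfl⟩
  rw [fiber]
  have hsplit := Finset.sum_filter_add_sum_filter_not
    ((univ : Finset (Fin n)).powerset.filter (fun S => i ∈ S))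
    (fun S => 1 < S.card)
    (fun S => ∑ κ ∈ q.support.filter (fun κ => κ.support = S), g κ)
  rw [← hsplit, add_comm]
  congr 1
  · -- not (1 < card) part equals the singleton sum
    have hset : (((univ : Finset (Fin n)).powerset.filter (fun S => i ∈ S)).filter
        (fun S => ¬ 1 < S.card)) = {({i} : Finset (Fin n))} := by
      ext S
      simp only [Finset.mem_filter, Finset.mem_powerset, Finset.mem_singleton, not_lt]
      constructor
      · rintro ⟨⟨-, hiS⟩, hcard⟩
        exact (Finset.eq_of_subset_of_card_le (Finset.singleton_subset_iff.mpr hiS)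
          (by simpa using hcard)).symm
      · rintro rfl
        exact ⟨⟨Finset.subset_univ _, Finset.mem_singleton_self i⟩, by simp⟩
    rw [hset, Finset.sum_singleton]
  · rw [Finset.filter_filter]
    refine Finset.sum_congr ?_ fun _ _ => rfl
    refine Finset.filter_congr fun S _ => ?_
    tauto
end

section
/- Let f : ℝⁿ → ℝ be a multivariate polynomial, b ∈ ℝⁿ a baseline point and x ∈ ℝⁿ an input, and let P ⊆ N be a patch of coordinates. The Occlusion-patch attribution, i.e. the output change when all coordinates in P are occluded by their baseline values, satisfies f(x) − f(x_{N∖P}) = ∑_{m ∈ P} ∑_{κ ∈ Ω_m} φ(κ) + ∑_{S ⊆ N, |S| > 1, S ∩ P ≠ ∅} ∑_{κ ∈ Ω_S} I(κ). -/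
open Finset

/-- For a polynomial `f : ℝⁿ → ℝ` with expansion `q` in powers of `x − b`
and a patch `P ⊆ N`, the Occlusion-patch attribution satisfies
`f(x) − f(x_{N∖P}) = ∑_{m ∈ P} ∑_{κ ∈ Ω_m} φ(κ) + ∑_{|S|>1, S ∩ P ≠ ∅} ∑_{κ ∈ Ω_S} I(κ)`. -/
theorem occlusion_patch {n : ℕ} (hn : 1 ≤ n) (f : (Fin n → ℝ) → ℝ)
    (q : MvPolynomial (Fin n) ℝ) (b x : Fin n → ℝ)
    (hf : ∀ y : Fin n → ℝ,
      f y = ∑ κ ∈ q.support, MvPolynomial.coeff κ q * ∏ i, (y i - b i) ^ κ i)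
    (P : Finset (Fin n)) :
    f x - f (fun i => if i ∈ P then b i else x i)
      = (∑ m ∈ P,
          ∑ κ ∈ q.support.filter (fun κ => κ.support = {m}),
            MvPolynomial.coeff κ q * ∏ j, (x j - b j) ^ κ j)
        + ∑ S ∈ (univ : Finset (Fin n)).powerset.filter
              (fun S => 1 < S.card ∧ (S ∩ P).Nonempty),
            ∑ κ ∈ q.support.filter (fun κ => κ.support = S),
              MvPolynomial.coeff κ q * ∏ j, (x j - b j) ^ κ j := by
    classical
  set g : (Fin n →₀ ℕ) → ℝ := fun κ => MvPolynomial.coeff κ q * ∏ j, (x j - b j) ^ κ j with hg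
  set p : (Fin n →₀ ℕ) → Prop := fun κ => (κ.support ∩ P).Nonempty with hp
  have hmask : (∑ κ ∈ q.support,
      MvPolynomial.coeff κ q * ∏ i, ((if i ∈ P then b i else x i) - b i) ^ κ i)
      = ∑ κ ∈ q.support, if p κ then 0 else g κ := by
    apply Finset.sum_congr rfl
    intro κ _
    split_ifs with h
    · obtain ⟨i, hi⟩ := h
      rw [Finset.mem_inter, Finsupp.mem_support_iff] at hi
      rw [Finset.prod_eq_zero (Finset.mem_univ i)]
      · ring
      · rw [if_pos hi.2]
        simp [zero_pow hi.1]
    · congr 1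
      apply Finset.prod_congr rfl
      intro i _
      by_cases hiP : i ∈ P
      · have hκi : κ i = 0 := by
          by_contra hk
          exact h ⟨i, Finset.mem_inter.2 ⟨Finsupp.mem_support_iff.2 hk, hiP⟩⟩
        simp [hκi]
      · rw [if_neg hiP]
  have hLHS : f x - f (fun i => if i ∈ P then b i else x i)
      = ∑ κ ∈ q.support.filter p, g κ := by
    rw [hf x, hf (fun i => if i ∈ P then b i else x i), hmask,
      Finset.sum_ite, Finset.sum_const_zero, zero_add,
      ← Finset.sum_filter_add_sum_filter_not q.support p g]
    ring
  rw [hLHS]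
  -- split by cardinality of support
  have hsplit := Finset.sum_filter_add_sum_filter_not (q.support.filter p)
    (fun κ => κ.support.card = 1) g
  rw [← hsplit, Finset.filter_filter, Finset.filter_filter]
  congr 1
  · -- singletons
    rw [← Finset.sum_biUnion]
    · apply Finset.sum_congr _ (fun _ _ => rfl)
      ext κ
      simp only [Finset.mem_biUnion, Finset.mem_filter]
      constructor
      · rintro ⟨hκ, ⟨i, hi⟩, hcard⟩
        obtain ⟨m, hm⟩ := Finset.card_eq_one.mp hcard
        rw [Finset.mem_inter, hm, Finset.mem_singleton] at hi
        exact ⟨m, hi.1 ▸ hi.2, hκ, hm⟩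
      · rintro ⟨m, hm, hκ, hs⟩
        refine ⟨hκ, ⟨m, ?_⟩, by simp [hs]⟩
        rw [Finset.mem_inter, hs]
        exact ⟨Finset.mem_singleton_self m, hm⟩
    · intro a _ c _ hac
      simp only [Function.onFun, Finset.disjoint_left, Finset.mem_filter]
      rintro κ ⟨_, hκa⟩ ⟨_, hκc⟩
      exact hac (by rw [← Finset.singleton_inj, ← hκa, ← hκc])
  · -- larger supports
    rw [← Finset.sum_biUnion]
    · apply Finset.sum_congr _ (fun _ _ => rfl)
      ext κ
      simp only [Finset.mem_biUnion, Finset.mem_filter, Finset.mem_powerset]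
      constructor
      · rintro ⟨hκ, hP, hcard⟩
        have h1 : 1 ≤ κ.support.card := Finset.card_pos.mpr
          ⟨hP.choose, (Finset.mem_inter.mp hP.choose_spec).1⟩
        exact ⟨κ.support, ⟨Finset.subset_univ _, by omega, hP⟩, hκ, rfl⟩
      · rintro ⟨S, ⟨_, hS1, hSP⟩, hκ, hs⟩
        refine ⟨hκ, ?_, ?_⟩ <;> simp only [hp, hs] <;> first | exact hSP | omega
    · intro a _ c _ hac
      simp only [Function.onFun, Finset.disjoint_left, Finset.mem_filter]
      rintro κ ⟨_, hκa⟩ ⟨_, hκc⟩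
      exact hac (hκa ▸ hκc)
end

section
/- Let f : ℝⁿ → ℝ be a multivariate polynomial, x ∈ ℝⁿ an input, and μ a probability measure on ℝ with finite moments of all orders. For every i ∈ N, the Prediction Difference attribution satisfies E_{b∼μ}[ f(x) − f(x with x_i replaced by b) ] = E_{b∼μ}[ ∑_{κ ∈ Ω_i} φ(κ | b·𝟙) + ∑_{S ⊆ N, |S| > 1, i ∈ S} ∑_{κ ∈ Ω_S} I(κ | b·𝟙) ], where for each scalar b the effects I(κ | b·𝟙) and φ(κ | b·𝟙) are computed with respect to the constant baseline point b·𝟙 = (b,…,b). -/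
open Finset MeasureTheory

/-- Prediction Difference.  `f : ℝⁿ → ℝ` is a polynomial function; for each
scalar baseline `t`, `q t` is its (unique, finite) expansion in powers of `x − t·𝟙`.
`μ` is a probability measure on `ℝ` with finite moments of all orders.  Then
`E_{b∼μ}[f(x) − f(x|_{x_i = b})]` equals the expectation of the allocated Taylor effects
with respect to the constant baseline `b·𝟙`. -/
theorem prediction_difference {n : ℕ} (hn : 1 ≤ n) (f : (Fin n → ℝ) → ℝ) (x : Fin n → ℝ)
    (μ : Measure ℝ) [IsProbabilityMeasure μ]
    (hmom : ∀ k : ℕ, Integrable (fun t : ℝ => t ^ k) μ)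
    (q : ℝ → MvPolynomial (Fin n) ℝ)
    (hq : ∀ t : ℝ, ∀ y : Fin n → ℝ,
      f y = ∑ κ ∈ (q t).support, MvPolynomial.coeff κ (q t) * ∏ j, (y j - t) ^ κ j)
    (i : Fin n) :
    ∫ t, (f x - f (Function.update x i t)) ∂μ
      = ∫ t,
          ((∑ κ ∈ (q t).support.filter (fun κ => κ.support = {i}),
              MvPolynomial.coeff κ (q t) * ∏ j, (x j - t) ^ κ j)
          + ∑ S ∈ (univ : Finset (Fin n)).powerset.filter (fun S => 1 < S.card ∧ i ∈ S),
              ∑ κ ∈ (q t).support.filter (fun κ => κ.support = S),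
                MvPolynomial.coeff κ (q t) * ∏ j, (x j - t) ^ κ j) ∂μ := by
  refine integral_congr_ae (Filter.Eventually.of_forall fun t => ?_)
  dsimp only
  set A := (q t).support with hA
  set g : (Fin n →₀ ℕ) → ℝ :=
    fun κ => MvPolynomial.coeff κ (q t) * ∏ j, (x j - t) ^ κ j with hg
  -- f x is the full sum
  have h1 : f x = ∑ κ ∈ A, g κ := hq t x
  -- f (update x i t) keeps only terms with κ i = 0
  have h2 : f (Function.update x i t) = ∑ κ ∈ A.filter (fun κ => κ i = 0), g κ := by
    rw [hq t (Function.update x i t), Finset.sum_filter]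
    refine Finset.sum_congr rfl fun κ _ => ?_
    by_cases hκ : κ i = 0
    · rw [if_pos hκ]
      congr 1
      refine Finset.prod_congr rfl fun j _ => ?_
      by_cases hj : j = i
      · subst hj; simp [hκ]
      · rw [Function.update_of_ne hj]
    · rw [if_neg hκ]
      have hz : (Function.update x i t i - t) ^ κ i = 0 := by
        simp [pow_eq_zero_iff hκ]
      rw [Finset.prod_eq_zero (Finset.mem_univ i) hz, mul_zero]
  have h3 : f x - f (Function.update x i t)
      = ∑ κ ∈ A.filter (fun κ => ¬ κ i = 0), g κ := by
    rw [h1, h2]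
    have h := Finset.sum_filter_add_sum_filter_not A (fun κ => κ i = 0) g
    linarith
  rw [h3]
  -- partition the RHS sum by support
  have hmap : ∀ κ ∈ A.filter (fun κ => ¬ κ i = 0), κ.support ∈
      (univ : Finset (Fin n)).powerset.filter (fun S => i ∈ S) := by
    intro κ hκ
    simp only [Finset.mem_filter] at hκ ⊢
    exact ⟨Finset.mem_powerset.2 (Finset.subset_univ _),
      Finsupp.mem_support_iff.2 hκ.2⟩
  have hfib := Finset.sum_fiberwise_of_maps_to hmap g
  rw [← hfib]
  set T := (univ : Finset (Fin n)).powerset.filter (fun S => i ∈ S) with hT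
  have hsplit := Finset.sum_filter_add_sum_filter_not T (fun S => S.card = 1)
      (fun S => ∑ κ ∈ (A.filter (fun κ => ¬ κ i = 0)).filter (fun κ => κ.support = S), g κ)
  rw [← hsplit]
  have hcollapse : ∀ S : Finset (Fin n), i ∈ S →
      (A.filter (fun κ => ¬ κ i = 0)).filter (fun κ => κ.support = S)
        = A.filter (fun κ => κ.support = S) := by
    intro S hiS
    ext κ
    simp only [Finset.mem_filter, and_assoc]
    constructor
    · rintro ⟨h1, h2, h3⟩; exact ⟨h1, h3⟩
    · rintro ⟨h1, h3⟩
      exact ⟨h1, Finsupp.mem_support_iff.1 (h3 ▸ hiS), h3⟩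
  congr 1
  · -- card = 1 part
    have hTs : T.filter (fun S => S.card = 1) = {({i} : Finset (Fin n))} := by
      ext S
      simp only [hT, Finset.mem_filter, Finset.mem_singleton, Finset.mem_powerset]
      constructor
      · rintro ⟨⟨-, hiS⟩, hcard⟩
        obtain ⟨a, rfl⟩ := Finset.card_eq_one.1 hcard
        rw [Finset.mem_singleton] at hiS
        rw [hiS]
      · rintro rfl
        exact ⟨⟨Finset.subset_univ _, Finset.mem_singleton_self i⟩, Finset.card_singleton i⟩
    rw [hTs, Finset.sum_singleton, hcollapse {i} (Finset.mem_singleton_self i)]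
  · -- card > 1 part
    have hTs : T.filter (fun S => ¬ S.card = 1)
        = (univ : Finset (Fin n)).powerset.filter (fun S => 1 < S.card ∧ i ∈ S) := by
      ext S
      simp only [hT, Finset.mem_filter, Finset.mem_powerset]
      constructor
      · rintro ⟨⟨hsub, hiS⟩, hcard⟩
        have : 0 < S.card := Finset.card_pos.2 ⟨i, hiS⟩
        exact ⟨hsub, by omega, hiS⟩
      · rintro ⟨hsub, hcard, hiS⟩
        exact ⟨⟨hsub, hiS⟩, by omega⟩
    rw [hTs]
    refine Finset.sum_congr rfl fun S hS => ?_
    simp only [Finset.mem_filter] at hS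
    rw [hcollapse S hS.2.2]
end

section
/- Let f : ℝⁿ → ℝ be a multivariate polynomial, b ∈ ℝⁿ a baseline point and x ∈ ℝⁿ an input. For every i ∈ N, the Integrated Gradients attribution satisfies (x_i − b_i) · ∫_0^1 (∂f/∂x_i)(b + α(x − b)) dα = ∑_{κ ∈ Ω_i} φ(κ) + ∑_{S ⊆ N, |S| > 1, i ∈ S} ∑_{κ ∈ Ω_S} (κ_i / ∑_{j ∈ N} κ_j) · I(κ). -/
open Finset

/-! Each shifted monomial `m_κ y = ∏ j, (y j - b j) ^ κ j` is homogeneous of degree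
`|κ| = ∑ j, κ j` in `y - b`, so along the segment
`(x i - b i) * ∂ᵢ m_κ (b + α (x - b)) = κ i * α ^ (|κ| - 1) * m_κ x`, which integrates over `[0, 1]`
to `κ i / |κ| * m_κ x`. Grouping the monomials by their support, this ratio is `1` when the
support is `{i}` and `0` when it does not contain `i`. -/

section ShiftedMonomial

variable {ι : Type*} [Fintype ι]

theorem integral_natCast_mul_pow_sum_sub_one (k : ι → ℕ) (i : ι) :
    ∫ α in (0:ℝ)..1, (k i : ℝ) * α ^ (∑ j, k j - 1) = k i / ∑ j, (k j : ℝ) := by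
  rcases Nat.eq_zero_or_pos (k i) with hki | hki
  · simp [hki]
  have hpos : 0 < ∑ j, k j :=
    hki.trans_le (single_le_sum (fun j _ => Nat.zero_le (k j)) (mem_univ i))
  rw [intervalIntegral.integral_const_mul, integral_pow, Nat.sub_add_cancel hpos,
    zero_pow hpos.ne', Nat.cast_sub hpos, Nat.cast_sum]
  simp [div_eq_mul_inv]

variable [DecidableEq ι]

theorem fderiv_prod_sub_pow_apply_single (k : ι → ℕ) (b p : ι → ℝ) (i : ι) :
    fderiv ℝ (fun y : ι → ℝ => ∏ j, (y j - b j) ^ k j) p (Pi.single i 1)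
      = k i * (p i - b i) ^ (k i - 1) * ∏ j ∈ univ.erase i, (p j - b j) ^ k j := by
  have hfactor : ∀ j ∈ univ, HasFDerivAt (fun y : ι → ℝ => (y j - b j) ^ k j)
      ((k j * (p j - b j) ^ (k j - 1)) •
        ContinuousLinearMap.proj (R := ℝ) (φ := fun _ : ι => ℝ) j) p :=
    fun j _ => (hasDerivAt_pow (k j) (p j - b j)).comp_hasFDerivAt p
      ((hasFDerivAt_apply j p).sub_const (b j))
  rw [(HasFDerivAt.finsetProd hfactor).fderiv, _root_.sum_apply,
    sum_eq_single i (fun j _ hj => by simp [Pi.single_eq_of_ne hj]) (by simp)]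
  simp only [smul_apply, ContinuousLinearMap.proj_apply, Pi.single_eq_same, smul_eq_mul]
  ring

theorem sub_mul_fderiv_prod_sub_pow_segment (k : ι → ℕ) (b x : ι → ℝ) (i : ι) (α : ℝ) :
    (x i - b i) * fderiv ℝ (fun y : ι → ℝ => ∏ j, (y j - b j) ^ k j)
        (fun j => b j + α * (x j - b j)) (Pi.single i 1)
      = k i * α ^ (∑ j, k j - 1) * ∏ j, (x j - b j) ^ k j := by
  rw [fderiv_prod_sub_pow_apply_single]
  simp only [add_sub_cancel_left]
  rcases Nat.eq_zero_or_pos (k i) with hki | hki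
  · simp [hki]
  obtain ⟨m, hm⟩ := Nat.exists_eq_add_of_lt hki
  have hsum : ∑ j, k j - 1 = m + ∑ j ∈ univ.erase i, k j := by
    rw [← add_sum_erase univ k (mem_univ i)]; omega
  rw [hsum, ← mul_prod_erase univ (fun j => (x j - b j) ^ k j) (mem_univ i), hm]
  simp only [zero_add, Nat.add_sub_cancel, mul_pow, prod_mul_distrib, prod_pow_eq_pow_sum, pow_add]
  ring

theorem sub_mul_integral_fderiv_prod_sub_pow_segment (k : ι → ℕ) (b x : ι → ℝ) (i : ι) :
    (x i - b i) * ∫ α in (0:ℝ)..1, fderiv ℝ (fun y : ι → ℝ => ∏ j, (y j - b j) ^ k j)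
        (fun j => b j + α * (x j - b j)) (Pi.single i 1)
      = (k i / ∑ j, (k j : ℝ)) * ∏ j, (x j - b j) ^ k j := by
  simp only [← intervalIntegral.integral_const_mul, sub_mul_fderiv_prod_sub_pow_segment,
    intervalIntegral.integral_mul_const, integral_natCast_mul_pow_sum_sub_one]

theorem sum_div_sum_mul_eq_add_sum_powerset (s : Finset (ι →₀ ℕ)) (g : (ι →₀ ℕ) → ℝ) (i : ι) :
    ∑ κ ∈ s, ((κ i : ℝ) / ∑ j, (κ j : ℝ)) * g κ
      = (∑ κ ∈ s.filter (fun κ => κ.support = {i}), g κ)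
        + ∑ S ∈ (univ : Finset ι).powerset.filter (fun S => 1 < S.card ∧ i ∈ S),
            ∑ κ ∈ s.filter (fun κ => κ.support = S), ((κ i : ℝ) / ∑ j, (κ j : ℝ)) * g κ := by
  have hratio_single : ∀ κ : ι →₀ ℕ, κ.support = {i} → (κ i : ℝ) / ∑ j, (κ j : ℝ) = 1 := by
    intro κ hκ
    have hsum : ∑ j, (κ j : ℝ) = κ i := sum_eq_single i (fun j _ hj => by
      simp [← Finsupp.notMem_support_iff, hκ, hj]) (by simp)
    rw [hsum, div_self (by simp [← Finsupp.mem_support_iff, hκ])]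
  have hinteraction : ∀ κ : ι →₀ ℕ, κ i ≠ 0 → (κ.support ≠ {i} ↔
      κ.support ∈ (univ : Finset ι).powerset.filter (fun S => 1 < S.card ∧ i ∈ S)) := by
    intro κ hκi
    have hi : i ∈ κ.support := Finsupp.mem_support_iff.2 hκi
    simp [hi, one_lt_card_iff_nontrivial, nontrivial_iff_ne_singleton hi]
  rw [sum_fiberwise_eq_sum_filter, ← sum_filter_add_sum_filter_not s (fun κ => κ.support = {i})]
  congr 1
  · exact sum_congr rfl fun κ hκ => by rw [hratio_single κ (mem_filter.1 hκ).2, one_mul]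
  · rw [sum_filter, sum_filter]
    refine sum_congr rfl fun κ _ => ?_
    by_cases hκi : κ i = 0
    · simp [hκi]
    · simp only [hinteraction κ hκi]

theorem sub_mul_integral_fderiv_sum_segment (s : Finset (ι →₀ ℕ)) (c : (ι →₀ ℕ) → ℝ)
    (b x : ι → ℝ) (i : ι) :
    (x i - b i) * ∫ α in (0:ℝ)..1,
        fderiv ℝ (fun y : ι → ℝ => ∑ κ ∈ s, c κ * ∏ j, (y j - b j) ^ κ j)
          (fun j => b j + α * (x j - b j)) (Pi.single i 1)
      = ∑ κ ∈ s, ((κ i : ℝ) / ∑ j, (κ j : ℝ)) * (c κ * ∏ j, (x j - b j) ^ κ j) := by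
  have hlinear : ∀ p : ι → ℝ,
      fderiv ℝ (fun y : ι → ℝ => ∑ κ ∈ s, c κ * ∏ j, (y j - b j) ^ κ j) p (Pi.single i 1)
        = ∑ κ ∈ s, c κ * fderiv ℝ (fun y : ι → ℝ => ∏ j, (y j - b j) ^ κ j) p (Pi.single i 1) := by
    intro p
    rw [fderiv_fun_sum fun κ _ => by fun_prop, _root_.sum_apply]
    refine sum_congr rfl fun κ _ => ?_
    rw [fderiv_const_mul (by fun_prop), smul_apply, smul_eq_mul]
  simp only [hlinear]
  rw [intervalIntegral.integral_finsetSum fun κ _ => Continuous.intervalIntegrable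
    (by simp only [fderiv_prod_sub_pow_apply_single]; fun_prop) _ _, mul_sum]
  refine sum_congr rfl fun κ _ => ?_
  rw [intervalIntegral.integral_const_mul, mul_left_comm,
    sub_mul_integral_fderiv_prod_sub_pow_segment]
  ring

end ShiftedMonomial

theorem integrated_gradients_general {n : ℕ} (f : (Fin n → ℝ) → ℝ)
    (q : MvPolynomial (Fin n) ℝ) (b x : Fin n → ℝ)
    (hf : ∀ y : Fin n → ℝ,
      f y = ∑ κ ∈ q.support, MvPolynomial.coeff κ q * ∏ i, (y i - b i) ^ κ i)
    (i : Fin n) :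
    (x i - b i) *
        ∫ α in (0:ℝ)..1,
          fderiv ℝ f (fun j => b j + α * (x j - b j)) (Pi.single i 1)
      = (∑ κ ∈ q.support.filter (fun κ => κ.support = {i}),
            MvPolynomial.coeff κ q * ∏ j, (x j - b j) ^ κ j)
        + ∑ S ∈ (univ : Finset (Fin n)).powerset.filter (fun S => 1 < S.card ∧ i ∈ S),
            ∑ κ ∈ q.support.filter (fun κ => κ.support = S),
              ((κ i : ℝ) / ∑ j, (κ j : ℝ)) *
                (MvPolynomial.coeff κ q * ∏ j, (x j - b j) ^ κ j) := by
  rw [funext hf, sub_mul_integral_fderiv_sum_segment, sum_div_sum_mul_eq_add_sum_powerset]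

/-- Integrated Gradients.  For a polynomial `f : ℝⁿ → ℝ` with expansion `q`
in powers of `x − b`, the Integrated Gradients attribution of variable `i` equals the
independent effects of `i` plus, for every interaction pattern `κ` involving `i`, the ratio
`κ_i / ∑_j κ_j` of the Taylor interaction effect `I(κ)`. -/
theorem integrated_gradients {n : ℕ} (hn : 1 ≤ n) (f : (Fin n → ℝ) → ℝ)
    (q : MvPolynomial (Fin n) ℝ) (b x : Fin n → ℝ)
    (hf : ∀ y : Fin n → ℝ,
      f y = ∑ κ ∈ q.support, MvPolynomial.coeff κ q * ∏ i, (y i - b i) ^ κ i)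
    (i : Fin n) :
    (x i - b i) *
        ∫ α in (0:ℝ)..1,
          fderiv ℝ f (fun j => b j + α * (x j - b j)) (Pi.single i 1)
      = (∑ κ ∈ q.support.filter (fun κ => κ.support = {i}),
            MvPolynomial.coeff κ q * ∏ j, (x j - b j) ^ κ j)
        + ∑ S ∈ (univ : Finset (Fin n)).powerset.filter (fun S => 1 < S.card ∧ i ∈ S),
            ∑ κ ∈ q.support.filter (fun κ => κ.support = S),
              ((κ i : ℝ) / ∑ j, (κ j : ℝ)) *
                (MvPolynomial.coeff κ q * ∏ j, (x j - b j) ^ κ j) :=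
  integrated_gradients_general f q b x hf i
end

section
/- Let f : ℝⁿ → ℝ be a multivariate polynomial, b ∈ ℝⁿ a baseline point and x ∈ ℝⁿ an input. For every i ∈ N, the Shapley value attribution a_i = ∑_{S ⊆ N∖{i}} (|S|!·(n−1−|S|)!/n!) · [f(x_{S∪{i}}) − f(x_S)] satisfies a_i = ∑_{κ ∈ Ω_i} φ(κ) + ∑_{S ⊆ N, |S| > 1, i ∈ S} ∑_{κ ∈ Ω_S} (1/|S|) · I(κ). -/
open Finset

private lemma key_nat (m t : ℕ) (ht : t ≤ m) :
    (∑ k ∈ range (m - t + 1),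
        (m - t).choose k * ((t + k).factorial * (m - (t + k)).factorial)) * (t + 1)
      = (m + 1).factorial := by
  have h1 : ∀ k ∈ range (m - t + 1),
      (m - t).choose k * ((t + k).factorial * (m - (t + k)).factorial)
        = (t + k).choose t * (t.factorial * (m - t).factorial) := by
    intro k hk
    have hk' : k ≤ m - t := by
      simp only [mem_range] at hk; omega
    have e1 : (m - t).choose k * k.factorial * (m - t - k).factorial = (m - t).factorial :=
      Nat.choose_mul_factorial_mul_factorial hk'
    have e2 : (t + k).choose t * t.factorial * k.factorial = (t + k).factorial := by
      have := Nat.choose_mul_factorial_mul_factorial (Nat.le_add_right t k)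
      simpa [Nat.add_sub_cancel_left] using this
    have hm : m - (t + k) = m - t - k := by omega
    apply Nat.eq_of_mul_eq_mul_right (Nat.factorial_pos k)
    rw [hm]
    calc (m - t).choose k * ((t + k).factorial * (m - t - k).factorial) * k.factorial
        = (t + k).factorial * ((m - t).choose k * k.factorial * (m - t - k).factorial) := by ring
      _ = (t + k).factorial * (m - t).factorial := by rw [e1]
      _ = ((t + k).choose t * t.factorial * k.factorial) * (m - t).factorial := by rw [e2]
      _ = (t + k).choose t * (t.factorial * (m - t).factorial) * k.factorial := by ring
  rw [Finset.sum_congr rfl h1, ← Finset.sum_mul]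
  have h2 : ∑ k ∈ range (m - t + 1), (t + k).choose t = (m + 1).choose (t + 1) := by
    have := Nat.sum_Icc_choose m t
    rw [← this, ← Finset.Ico_add_one_right_eq_Icc, Finset.sum_Ico_eq_sum_range]
    have : m + 1 - t = m - t + 1 := by omega
    rw [this]
  rw [h2]
  have h3 := Nat.choose_mul_factorial_mul_factorial (Nat.succ_le_succ ht)
  have hm : m + 1 - (t + 1) = m - t := by omega
  rw [hm] at h3
  calc (m + 1).choose (t + 1) * (t.factorial * (m - t).factorial) * (t + 1)
      = (m + 1).choose (t + 1) * ((t + 1) * t.factorial) * (m - t).factorial := by ring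
    _ = (m + 1).choose (t + 1) * (t + 1).factorial * (m - t).factorial := by
        rw [Nat.factorial_succ]
    _ = (m + 1).factorial := h3

private lemma key_real (m t : ℕ) (ht : t ≤ m) :
    ∑ k ∈ range (m - t + 1),
        (((m - t).choose k : ℝ)) *
          ((((t + k).factorial * (m - (t + k)).factorial : ℕ) : ℝ) / ((m + 1).factorial : ℝ))
      = 1 / ((t : ℝ) + 1) := by
  have hN := key_nat m t ht
  have hcast : ((∑ k ∈ range (m - t + 1),
      (m - t).choose k * ((t + k).factorial * (m - (t + k)).factorial) : ℕ) : ℝ) * ((t : ℝ) + 1)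
      = ((m + 1).factorial : ℝ) := by
    rw [← Nat.cast_succ, ← Nat.cast_mul, hN]
  push_cast at hcast
  have hfac : ((m + 1).factorial : ℝ) ≠ 0 := Nat.cast_ne_zero.2 (Nat.factorial_ne_zero _)
  have ht1 : (t : ℝ) + 1 ≠ 0 := by positivity
  rw [eq_div_iff ht1]
  have : ∑ k ∈ range (m - t + 1),
        (((m - t).choose k : ℝ)) *
          ((((t + k).factorial * (m - (t + k)).factorial : ℕ) : ℝ) / ((m + 1).factorial : ℝ))
      = (∑ k ∈ range (m - t + 1),
          (((m - t).choose k : ℝ)) * (((t + k).factorial : ℝ) * ((m - (t + k)).factorial : ℝ)))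
        / ((m + 1).factorial : ℝ) := by
    rw [Finset.sum_div]
    refine Finset.sum_congr rfl fun k _ => ?_
    push_cast
    ring
  rw [this, div_mul_eq_mul_div, hcast, div_self hfac]

private lemma shapley_weight {n : ℕ} (hn : 1 ≤ n) (i : Fin n) (T : Finset (Fin n))
    (hiT : i ∉ T) :
    ∑ S ∈ (((univ : Finset (Fin n)).erase i).powerset.filter fun S => T ⊆ S),
      ((S.card.factorial * (n - 1 - S.card).factorial : ℕ) : ℝ) / (n.factorial : ℝ)
      = 1 / ((T.card : ℝ) + 1) := by
  set A := (univ : Finset (Fin n)).erase i with hA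
  have hTA : T ⊆ A := fun j hj => mem_erase.2 ⟨fun h => hiT (h ▸ hj), mem_univ j⟩
  have hAcard : A.card = n - 1 := by
    rw [hA, card_erase_of_mem (mem_univ i), card_univ, Fintype.card_fin]
  set t := T.card with htdef
  have htm : t ≤ n - 1 := hAcard ▸ card_le_card hTA
  -- bijection with powerset of A \ T
  have hbij : ∑ S ∈ (A.powerset.filter fun S => T ⊆ S),
        ((S.card.factorial * (n - 1 - S.card).factorial : ℕ) : ℝ) / (n.factorial : ℝ)
      = ∑ U ∈ (A \ T).powerset,
        (((t + U.card).factorial * (n - 1 - (t + U.card)).factorial : ℕ) : ℝ)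
          / (n.factorial : ℝ) := by
    refine Finset.sum_nbij' (fun S => S \ T) (fun U => T ∪ U) ?_ ?_ ?_ ?_ ?_
    · intro S hS
      simp only [mem_filter, mem_powerset] at hS
      exact mem_powerset.2 (sdiff_subset_sdiff hS.1 Subset.rfl)
    · intro U hU
      simp only [mem_powerset] at hU
      refine mem_filter.2 ⟨mem_powerset.2 (union_subset hTA (hU.trans sdiff_subset)), ?_⟩
      exact subset_union_left
    · intro S hS
      simp only [mem_filter, mem_powerset] at hS
      exact union_sdiff_of_subset hS.2
    · intro U hU
      simp only [mem_powerset] at hU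
      have : Disjoint T U := (disjoint_sdiff.mono_left (le_refl T)).mono_right hU
      exact union_sdiff_cancel_left this
    · intro S hS
      simp only [mem_filter, mem_powerset] at hS
      have : t + (S \ T).card = S.card := by
        rw [card_sdiff_of_subset hS.2]
        have := card_le_card hS.2
        omega
      rw [this]
  rw [hbij]
  have hBcard : (A \ T).card = n - 1 - t := by
    rw [card_sdiff_of_subset hTA, hAcard]
  rw [Finset.sum_powerset]
  have hinner : ∀ j ∈ range ((A \ T).card + 1),
      ∑ U ∈ powersetCard j (A \ T),
        (((t + U.card).factorial * (n - 1 - (t + U.card)).factorial : ℕ) : ℝ)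
          / (n.factorial : ℝ)
      = ((n - 1 - t).choose j : ℝ) *
          ((((t + j).factorial * (n - 1 - (t + j)).factorial : ℕ) : ℝ) / (n.factorial : ℝ)) := by
    intro j _
    rw [Finset.sum_congr rfl (fun U hU => by
      rw [(mem_powersetCard.1 hU).2]), Finset.sum_const, card_powersetCard, hBcard,
      nsmul_eq_mul]
  rw [Finset.sum_congr rfl hinner, hBcard]
  have hm : n - 1 + 1 = n := by omega
  have := key_real (n - 1) t htm
  rw [hm] at this
  have heq : ∀ k ∈ range (n - 1 - t + 1),
      ((n - 1 - t).choose k : ℝ) *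
          ((((t + k).factorial * (n - 1 - (t + k)).factorial : ℕ) : ℝ) / (n.factorial : ℝ))
      = ((n - 1 - t).choose k : ℝ) *
          ((((t + k).factorial * (n - 1 - (t + k)).factorial : ℕ) : ℝ) / (n.factorial : ℝ)) :=
    fun _ _ => rfl
  exact this

private lemma mask_prod {n : ℕ} (x b : Fin n → ℝ) (T : Finset (Fin n)) (κ : Fin n →₀ ℕ) :
    ∏ j, ((if j ∈ T then x j else b j) - b j) ^ κ j
      = if κ.support ⊆ T then ∏ j, (x j - b j) ^ κ j else 0 := by
  by_cases h : κ.support ⊆ T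
  · rw [if_pos h]
    refine Finset.prod_congr rfl fun j _ => ?_
    by_cases hj : κ j = 0
    · simp [hj]
    · have : j ∈ T := h (Finsupp.mem_support_iff.2 hj)
      rw [if_pos this]
  · rw [if_neg h]
    obtain ⟨j, hj1, hj2⟩ := not_subset.1 h
    refine Finset.prod_eq_zero (mem_univ j) ?_
    rw [if_neg hj2, sub_self]
    exact zero_pow (Finsupp.mem_support_iff.1 hj1)

/-- Shapley value.  For a polynomial `f : ℝⁿ → ℝ` with expansion `q` in
powers of `x − b`, the Shapley value attribution of variable `i`
(`∑_{S ⊆ N∖{i}} |S|!(n−1−|S|)!/n! · [f(x_{S∪{i}}) − f(x_S)]`) allocates the full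
independent effect of `i` and a `1/|S|` share of every Taylor interaction effect whose
receptive field `S` contains `i`. -/
theorem shapley_value {n : ℕ} (hn : 1 ≤ n) (f : (Fin n → ℝ) → ℝ)
    (q : MvPolynomial (Fin n) ℝ) (b x : Fin n → ℝ)
    (hf : ∀ y : Fin n → ℝ,
      f y = ∑ κ ∈ q.support, MvPolynomial.coeff κ q * ∏ i, (y i - b i) ^ κ i)
    (i : Fin n) :
    ∑ S ∈ ((univ : Finset (Fin n)).erase i).powerset,
        ((S.card.factorial * (n - 1 - S.card).factorial : ℕ) : ℝ) / (n.factorial : ℝ) *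
          (f (fun j => if j ∈ insert i S then x j else b j)
            - f (fun j => if j ∈ S then x j else b j))
      = (∑ κ ∈ q.support.filter (fun κ => κ.support = {i}),
            MvPolynomial.coeff κ q * ∏ j, (x j - b j) ^ κ j)
        + ∑ S ∈ (univ : Finset (Fin n)).powerset.filter (fun S => 1 < S.card ∧ i ∈ S),
            ∑ κ ∈ q.support.filter (fun κ => κ.support = S),
              (1 / (S.card : ℝ)) *
                (MvPolynomial.coeff κ q * ∏ j, (x j - b j) ^ κ j) := by
  classical
  set P : (Fin n →₀ ℕ) → ℝ := fun κ => MvPolynomial.coeff κ q * ∏ j, (x j - b j) ^ κ j with hP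
  set w : ℕ → ℝ := fun c => ((c.factorial * (n - 1 - c).factorial : ℕ) : ℝ) / (n.factorial : ℝ)
    with hw
  have hmask : ∀ T : Finset (Fin n),
      f (fun j => if j ∈ T then x j else b j)
        = ∑ κ ∈ q.support, if κ.support ⊆ T then P κ else 0 := by
    intro T
    rw [hf]
    refine Finset.sum_congr rfl fun κ _ => ?_
    rw [mask_prod x b T κ, mul_ite, mul_zero]
  -- transform LHS
  have hLHS : ∑ S ∈ ((univ : Finset (Fin n)).erase i).powerset,
        w S.card *
          (f (fun j => if j ∈ insert i S then x j else b j)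
            - f (fun j => if j ∈ S then x j else b j))
      = ∑ κ ∈ q.support,
          (if i ∈ κ.support then P κ / (κ.support.card : ℝ) else 0) := by
    have step1 : ∀ S ∈ ((univ : Finset (Fin n)).erase i).powerset,
        w S.card *
          (f (fun j => if j ∈ insert i S then x j else b j)
            - f (fun j => if j ∈ S then x j else b j))
        = ∑ κ ∈ q.support,
            w S.card * ((if κ.support ⊆ insert i S then P κ else 0)
              - (if κ.support ⊆ S then P κ else 0)) := by
      intro S _
      rw [hmask, hmask, ← Finset.sum_sub_distrib, Finset.mul_sum]
    rw [Finset.sum_congr rfl step1, Finset.sum_comm]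
    refine Finset.sum_congr rfl fun κ _ => ?_
    by_cases hi : i ∈ κ.support
    · rw [if_pos hi]
      have step2 : ∀ S ∈ ((univ : Finset (Fin n)).erase i).powerset,
          w S.card * ((if κ.support ⊆ insert i S then P κ else 0)
            - (if κ.support ⊆ S then P κ else 0))
          = if κ.support.erase i ⊆ S then w S.card * P κ else 0 := by
        intro S hS
        have hiS : i ∉ S := fun h =>
          (mem_erase.1 ((mem_powerset.1 hS) h)).1 rfl
        have h1 : (κ.support ⊆ insert i S) ↔ (κ.support.erase i ⊆ S) :=
          Finset.subset_insert_iff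
        have h2 : ¬ (κ.support ⊆ S) := fun h => hiS (h hi)
        rw [if_neg h2, sub_zero]
        by_cases h3 : κ.support.erase i ⊆ S
        · rw [if_pos (h1.2 h3), if_pos h3]
        · rw [if_neg (fun h => h3 (h1.1 h)), if_neg h3, mul_zero]
      rw [Finset.sum_congr rfl step2, ← Finset.sum_filter, ← Finset.sum_mul]
      have hiT : i ∉ κ.support.erase i := notMem_erase i _
      have := shapley_weight hn i (κ.support.erase i) hiT
      rw [hw]
      rw [this]
      have hcard : ((κ.support.erase i).card : ℝ) + 1 = (κ.support.card : ℝ) := by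
        rw [card_erase_of_mem hi]
        have h1 : 1 ≤ κ.support.card := card_pos.2 ⟨i, hi⟩
        have h2 : κ.support.card - 1 + 1 = κ.support.card := Nat.sub_add_cancel h1
        exact_mod_cast congrArg (Nat.cast : ℕ → ℝ) h2
      rw [hcard, one_div, inv_mul_eq_div]
    · rw [if_neg hi]
      refine Finset.sum_eq_zero fun S _ => ?_
      simp only [Finset.subset_insert_iff_of_notMem hi, sub_self, mul_zero]
  rw [hLHS]
  -- transform RHS
  have hRHS2 : ∑ S ∈ (univ : Finset (Fin n)).powerset.filter (fun S => 1 < S.card ∧ i ∈ S),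
        ∑ κ ∈ q.support.filter (fun κ => κ.support = S),
          (1 / (S.card : ℝ)) * P κ
      = ∑ κ ∈ q.support.filter
          (fun κ => 1 < κ.support.card ∧ i ∈ κ.support), P κ / (κ.support.card : ℝ) := by
    have : ∀ S ∈ (univ : Finset (Fin n)).powerset.filter (fun S => 1 < S.card ∧ i ∈ S),
        ∑ κ ∈ q.support.filter (fun κ => κ.support = S), (1 / (S.card : ℝ)) * P κ
        = ∑ κ ∈ q.support.filter (fun κ => κ.support = S),
            P κ / (κ.support.card : ℝ) := by
      intro S _
      refine Finset.sum_congr rfl fun κ hκ => ?_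
      rw [(mem_filter.1 hκ).2, one_div, inv_mul_eq_div]
    rw [Finset.sum_congr rfl this,
      Finset.sum_fiberwise_eq_sum_filter q.support
        ((univ : Finset (Fin n)).powerset.filter (fun S => 1 < S.card ∧ i ∈ S))
        (fun κ => κ.support) (fun κ => P κ / (κ.support.card : ℝ))]
    refine Finset.sum_congr ?_ fun _ _ => rfl
    ext κ
    simp [Finset.subset_univ]
  have hRHS1 : ∑ κ ∈ q.support.filter (fun κ => κ.support = {i}), P κ
      = ∑ κ ∈ q.support.filter
          (fun κ => ¬ 1 < κ.support.card ∧ i ∈ κ.support), P κ / (κ.support.card : ℝ) := by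
    have hset : q.support.filter (fun κ => κ.support = {i})
        = q.support.filter (fun κ => ¬ 1 < κ.support.card ∧ i ∈ κ.support) := by
      ext κ
      simp only [mem_filter, and_congr_right_iff]
      intro _
      constructor
      · intro h
        rw [h]
        simp
      · rintro ⟨h1, h2⟩
        have hc : κ.support.card = 1 := by
          have : 1 ≤ κ.support.card := card_pos.2 ⟨i, h2⟩
          omega
        obtain ⟨a, ha⟩ := card_eq_one.1 hc
        rw [ha] at h2 ⊢
        simp only [mem_singleton] at h2
        rw [h2]
    rw [hset]
    refine Finset.sum_congr rfl fun κ hκ => ?_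
    obtain ⟨_, h1, h2⟩ := mem_filter.1 hκ
    have hc : κ.support.card = 1 := by
      have : 1 ≤ κ.support.card := card_pos.2 ⟨i, h2⟩
      omega
    rw [hc]
    norm_num
  rw [hRHS1, hRHS2, ← Finset.sum_filter, ← Finset.sum_filter_add_sum_filter_not
    (q.support.filter (fun κ => i ∈ κ.support)) (fun κ => 1 < κ.support.card)
    (fun κ => P κ / (κ.support.card : ℝ))]
  rw [Finset.filter_filter, Finset.filter_filter]
  have e1 : q.support.filter (fun κ : Fin n →₀ ℕ => i ∈ κ.support ∧ 1 < κ.support.card)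
      = q.support.filter (fun κ => 1 < κ.support.card ∧ i ∈ κ.support) := by
    ext κ; simp [and_comm]
  have e2 : q.support.filter (fun κ : Fin n →₀ ℕ => i ∈ κ.support ∧ ¬ 1 < κ.support.card)
      = q.support.filter (fun κ => ¬ 1 < κ.support.card ∧ i ∈ κ.support) := by
    ext κ; simp [and_comm]
  rw [e1, e2, add_comm]
end

section
/- Let f : ℝⁿ → ℝ be a multivariate polynomial, b ∈ ℝⁿ a baseline point and x ∈ ℝⁿ an input. For every i ∈ N and every S ⊆ N∖{i}, the marginal contribution of variable i to the context S satisfies f(x_{S∪{i}}) − f(x_S) = ∑_{κ ∈ Ω_i} φ(κ) + ∑_{T ⊆ N : i ∈ T, |T| > 1, T∖{i} ⊆ S} ∑_{κ ∈ Ω_T} I(κ). -/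
open Finset

/-- Marginal contribution.  For a polynomial `f : ℝⁿ → ℝ` with expansion
`q` in powers of `x − b`, for every `i` and every context `S ⊆ N∖{i}`:
`f(x_{S∪{i}}) − f(x_S) = ∑_{κ ∈ Ω_i} φ(κ) + ∑_{T : i ∈ T, |T|>1, T∖{i} ⊆ S} ∑_{κ ∈ Ω_T} I(κ)`. -/
theorem marginal_contribution {n : ℕ} (hn : 1 ≤ n) (f : (Fin n → ℝ) → ℝ)
    (q : MvPolynomial (Fin n) ℝ) (b x : Fin n → ℝ)
    (hf : ∀ y : Fin n → ℝ,
      f y = ∑ κ ∈ q.support, MvPolynomial.coeff κ q * ∏ i, (y i - b i) ^ κ i)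
    (i : Fin n) (S : Finset (Fin n)) (hS : S ⊆ univ.erase i) :
    f (fun j => if j ∈ insert i S then x j else b j)
        - f (fun j => if j ∈ S then x j else b j)
      = (∑ κ ∈ q.support.filter (fun κ => κ.support = {i}),
            MvPolynomial.coeff κ q * ∏ j, (x j - b j) ^ κ j)
        + ∑ T ∈ (univ : Finset (Fin n)).powerset.filter
              (fun T => i ∈ T ∧ 1 < T.card ∧ T.erase i ⊆ S),
            ∑ κ ∈ q.support.filter (fun κ => κ.support = T),
              MvPolynomial.coeff κ q * ∏ j, (x j - b j) ^ κ j := by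
  classical
  have hiS : i ∉ S := fun h => (Finset.mem_erase.mp (hS h)).1 rfl
  -- evaluation of f at masked inputs
  have key : ∀ T : Finset (Fin n),
      f (fun j => if j ∈ T then x j else b j)
        = ∑ κ ∈ q.support.filter (fun κ => κ.support ⊆ T),
            MvPolynomial.coeff κ q * ∏ j, (x j - b j) ^ κ j := by
    intro T
    rw [hf]
    rw [← Finset.sum_filter_add_sum_filter_not q.support (fun κ => κ.support ⊆ T)]
    have h2 : ∑ κ ∈ q.support.filter (fun κ => ¬ κ.support ⊆ T),
        MvPolynomial.coeff κ q * ∏ j, ((if j ∈ T then x j else b j) - b j) ^ κ j = 0 := by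
      apply Finset.sum_eq_zero
      intro κ hκ
      obtain ⟨j, hj, hjT⟩ := Finset.not_subset.mp (Finset.mem_filter.mp hκ).2
      have hz : ((if j ∈ T then x j else b j) - b j) ^ κ j = 0 := by
        rw [if_neg hjT, sub_self]
        exact zero_pow (Finsupp.mem_support_iff.mp hj)
      rw [Finset.prod_eq_zero (Finset.mem_univ j) hz, mul_zero]
    rw [h2, add_zero]
    apply Finset.sum_congr rfl
    intro κ hκ
    congr 1
    apply Finset.prod_congr rfl
    intro j _
    by_cases hjT : j ∈ T
    · rw [if_pos hjT]
    · have : κ j = 0 := by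
        by_contra h
        exact hjT ((Finset.mem_filter.mp hκ).2 (Finsupp.mem_support_iff.mpr h))
      simp [this]
  rw [key (insert i S), key S]
  have hsub : q.support.filter (fun κ => κ.support ⊆ S)
      ⊆ q.support.filter (fun κ => κ.support ⊆ insert i S) := by
    intro κ hκ
    rw [Finset.mem_filter] at hκ ⊢
    exact ⟨hκ.1, hκ.2.trans (Finset.subset_insert i S)⟩
  rw [← Finset.sum_sdiff_eq_sub hsub]
  have hset : q.support.filter (fun κ => κ.support ⊆ insert i S)
        \ q.support.filter (fun κ => κ.support ⊆ S)
      = q.support.filter (fun κ => i ∈ κ.support ∧ κ.support.erase i ⊆ S) := by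
    ext κ
    simp only [Finset.mem_sdiff, Finset.mem_filter, not_and]
    constructor
    · rintro ⟨⟨hq, hsub1⟩, hnot⟩
      have hnotS : ¬ κ.support ⊆ S := fun h => hnot hq h
      have hi : i ∈ κ.support := by
        by_contra hi
        apply hnotS
        intro j hj
        rcases Finset.mem_insert.mp (hsub1 hj) with rfl | h
        · exact absurd hj hi
        · exact h
      refine ⟨hq, hi, ?_⟩
      intro j hj
      obtain ⟨hji, hjs⟩ := Finset.mem_erase.mp hj
      rcases Finset.mem_insert.mp (hsub1 hjs) with rfl | h
      · exact absurd rfl hji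
      · exact h
    · rintro ⟨hq, hi, her⟩
      refine ⟨⟨hq, ?_⟩, ?_⟩
      · intro j hj
        by_cases hji : j = i
        · exact Finset.mem_insert.mpr (Or.inl hji)
        · exact Finset.mem_insert.mpr (Or.inr (her (Finset.mem_erase.mpr ⟨hji, hj⟩)))
      · intro _ hsubS
        exact hiS (hsubS hi)
  rw [hset]
  rw [Finset.sum_fiberwise_eq_sum_filter q.support
    ((univ : Finset (Fin n)).powerset.filter (fun T => i ∈ T ∧ 1 < T.card ∧ T.erase i ⊆ S))
    (fun κ => κ.support)
    (fun κ => MvPolynomial.coeff κ q * ∏ j, (x j - b j) ^ κ j)]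
  rw [← Finset.sum_filter_add_sum_filter_not
    (q.support.filter (fun κ => i ∈ κ.support ∧ κ.support.erase i ⊆ S))
    (fun κ => κ.support = {i})]
  congr 1
  · apply Finset.sum_congr _ (fun _ _ => rfl)
    ext κ
    simp only [Finset.mem_filter, and_assoc]
    constructor
    · rintro ⟨hq, _, _, h⟩; exact ⟨hq, h⟩
    · rintro ⟨hq, h⟩
      refine ⟨hq, ?_, ?_, h⟩ <;> simp [h]
  · apply Finset.sum_congr _ (fun _ _ => rfl)
    ext κ
    simp only [Finset.mem_filter, Finset.mem_powerset, Finset.subset_univ, true_and, and_assoc]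
    constructor
    · rintro ⟨hq, hi, her, hne⟩
      refine ⟨hq, hi, ?_, her⟩
      rcases lt_or_ge 1 κ.support.card with h | h
      · exact h
      · exfalso
        apply hne
        have h1 : κ.support.card = 1 := le_antisymm h (Finset.card_pos.mpr ⟨i, hi⟩)
        obtain ⟨a, ha⟩ := Finset.card_eq_one.mp h1
        rw [ha] at hi ⊢
        rw [Finset.mem_singleton.mp hi]
    · rintro ⟨hq, hi, hcard, her⟩
      refine ⟨hq, hi, her, ?_⟩
      intro h
      rw [h, Finset.card_singleton] at hcard
      exact lt_irrefl 1 hcard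
end

section
/- For all natural numbers n and t with 1 ≤ t ≤ n, the following identity of rational numbers holds: ∑_{s = t−1}^{n−1} (s!·(n−1−s)!/n!) · binom(n−t, s−t+1) = 1/t. -/
/-!
Writing `p = t - 1`, the `s`-th term equals `C(s, p) · p! (n - t)! / n!`, so the hockey-stick
identity `∑_{s = p}^{n - 1} C(s, p) = C(n, t)` turns the sum into `C(n, t) · (t - 1)! (n - t)! / n!`,
which is `(t - 1)! / t! = 1 / t`.
-/

open Finset Nat

theorem Nat.factorial_mul_factorial_sub_mul_choose {p m s : ℕ} (hps : p ≤ s) (hsm : s - p ≤ m) :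
    s ! * (m - (s - p))! * m.choose (s - p) = s.choose p * p ! * m ! := by
  apply Nat.eq_of_mul_eq_mul_right (factorial_pos (s - p))
  calc s ! * (m - (s - p))! * m.choose (s - p) * (s - p)!
      = s ! * (m.choose (s - p) * (s - p)! * (m - (s - p))!) := by ring
    _ = s ! * m ! := by rw [choose_mul_factorial_mul_factorial hsm]
    _ = s.choose p * p ! * (s - p)! * m ! := by rw [choose_mul_factorial_mul_factorial hps]
    _ = s.choose p * p ! * m ! * (s - p)! := by ring

theorem Nat.cast_choose_succ_mul_factorial_div {K : Type*} [Field K] [CharZero K] {n k : ℕ}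
    (hkn : k + 1 ≤ n) :
    (n.choose (k + 1) : K) * ((k ! * (n - (k + 1))! : ℕ) / n !) = 1 / (k + 1 : ℕ) := by
  have h := choose_mul_factorial_mul_factorial hkn
  rw [factorial_succ] at h
  rw [← mul_div_assoc, ← Nat.cast_mul, div_eq_div_iff (by exact_mod_cast (factorial_pos n).ne')
    (by exact_mod_cast succ_ne_zero k)]
  exact_mod_cast (by rw [← h]; ring : n.choose (k + 1) * (k ! * (n - (k + 1))!) * (k + 1) = 1 * n !)

/-- The hockey-stick coefficient computation: for `1 ≤ t ≤ n`,
`∑_{s = t−1}^{n−1} (s!·(n−1−s)!/n!) · C(n−t, s−(t−1)) = 1/t`. -/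
theorem shapley_coefficient (n t : ℕ) (ht : 1 ≤ t) (htn : t ≤ n) :
    ∑ s ∈ Finset.Icc (t - 1) (n - 1),
        ((s.factorial * (n - 1 - s).factorial : ℕ) : ℚ) / (n.factorial : ℚ) *
          (((n - t).choose (s - (t - 1)) : ℕ) : ℚ)
      = 1 / (t : ℚ) := by
  obtain ⟨p, rfl⟩ : ∃ p, t = p + 1 := ⟨t - 1, by omega⟩
  rw [Nat.add_sub_cancel]
  have hterm : ∀ s ∈ Icc p (n - 1),
      ((s ! * (n - 1 - s)! : ℕ) : ℚ) / n ! * ((n - (p + 1)).choose (s - p) : ℕ)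
        = (s.choose p : ℚ) * ((p ! * (n - (p + 1))! : ℕ) / n !) := by
    intro s hs
    rw [mem_Icc] at hs
    have h := factorial_mul_factorial_sub_mul_choose (m := n - (p + 1)) hs.1 (by omega)
    rw [show n - (p + 1) - (s - p) = n - 1 - s by omega] at h
    rw [div_mul_eq_mul_div, ← Nat.cast_mul, h]
    push_cast
    ring
  rw [sum_congr rfl hterm, ← sum_mul, ← Nat.cast_sum, sum_Icc_choose, Nat.sub_add_cancel (by omega)]
  exact cast_choose_succ_mul_factorial_div htn
end

section
/- Let N be a finite set with n = |N| ≥ 1 and let v : 𝒫(N) → ℝ be any set function. Then the Shapley values satisfy the efficiency identity ∑_{i ∈ N} ∑_{S ⊆ N∖{i}} (|S|!·(n−1−|S|)!/n!) · (v(S∪{i}) − v(S)) = v(N) − v(∅). -/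
/-!
Each coalition `T` of size `t` is reached `t` times as some `S ∪ {i}` and left `n - t` times as
some `S` with `i ∉ S`. With the Shapley weights both counts give `v T` the same coefficient
`t! (n - t)! / n!`, except that `∅` is never reached and `N` is never left; so all terms cancel
except `v N` and `v ∅`, whose coefficients are `1`.
-/

open Finset

open scoped Nat

section Counting

variable {ι M : Type*} [Fintype ι] [DecidableEq ι] [AddCommMonoid M]

theorem sum_sum_powerset_erase_insert (g : Finset ι → M) :
    ∑ i, ∑ S ∈ (univ.erase i).powerset, g (insert i S) = ∑ T, #T • g T := by
  have reindex (i : ι) :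
      ∑ S ∈ (univ.erase i).powerset, g (insert i S) = ∑ T with i ∈ T, g T := by
    refine sum_nbij' (insert i) (erase · i) ?_ ?_ ?_ ?_ ?_ <;> simp_all [subset_erase]
  simp_rw [reindex]
  rw [sum_comm' (t' := univ) (s' := id)] <;> simp

theorem sum_sum_powerset_erase (g : Finset ι → M) :
    ∑ i, ∑ S ∈ (univ.erase i).powerset, g S = ∑ T, (Fintype.card ι - #T) • g T := by
  have reindex (i : ι) : ∑ S ∈ (univ.erase i).powerset, g S = ∑ T with i ∉ T, g T := by
    congr 1; ext S; simp [subset_erase]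
  simp_rw [reindex]
  rw [sum_comm' (t' := univ) (s' := compl)] <;> simp [card_compl]

end Counting

noncomputable def shapleyWeight (n k : ℕ) : ℝ := ((k ! * (n - 1 - k)! : ℕ) : ℝ) / (n ! : ℝ)

/-- This is `(n.choose t)⁻¹` for `t ≤ n`. -/
noncomputable def coalitionWeight (n t : ℕ) : ℝ := ((t ! * (n - t)! : ℕ) : ℝ) / (n ! : ℝ)

theorem coalitionWeight_zero (n : ℕ) : coalitionWeight n 0 = 1 := by
  simp [coalitionWeight, Nat.factorial_ne_zero]

theorem coalitionWeight_self (n : ℕ) : coalitionWeight n n = 1 := by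
  simp [coalitionWeight, Nat.factorial_ne_zero]

theorem natCast_mul_shapleyWeight_pred {n t : ℕ} (ht : 1 ≤ t) (htn : t ≤ n) :
    (t : ℝ) * shapleyWeight n (t - 1) = coalitionWeight n t := by
  obtain ⟨s, rfl⟩ := Nat.exists_eq_add_of_le' ht
  rw [shapleyWeight, coalitionWeight, Nat.add_sub_cancel,
    show n - 1 - s = n - (s + 1) by omega, Nat.factorial_succ]
  push_cast
  ring

theorem natCast_sub_mul_shapleyWeight {n t : ℕ} (htn : t < n) :
    ((n - t : ℕ) : ℝ) * shapleyWeight n t = coalitionWeight n t := by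
  obtain ⟨m, hm⟩ := Nat.exists_eq_add_of_lt htn
  rw [shapleyWeight, coalitionWeight, show n - t = m + 1 by omega, show n - 1 - t = m by omega,
    Nat.factorial_succ]
  push_cast
  ring

section Marginals

variable {ι : Type*} [Fintype ι] [DecidableEq ι] (v : Finset ι → ℝ)

theorem sum_sum_shapleyWeight_mul_insert :
    ∑ i, ∑ S ∈ (univ.erase i).powerset, shapleyWeight (Fintype.card ι) #S * v (insert i S)
      = ∑ T ∈ univ.erase ∅, coalitionWeight (Fintype.card ι) #T * v T := by
  have card_eq (i : ι) (S : Finset ι) (hS : S ∈ (univ.erase i).powerset) :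
      #S = #(insert i S) - 1 := by
    simp_all [subset_erase, card_insert_of_notMem]
  rw [sum_congr rfl fun i _ => sum_congr rfl fun S hS => by rw [card_eq i S hS],
    sum_sum_powerset_erase_insert fun T => shapleyWeight (Fintype.card ι) (#T - 1) * v T,
    ← sum_erase (a := ∅) _ (by simp)]
  refine sum_congr rfl fun T hT => ?_
  rw [nsmul_eq_mul, ← mul_assoc, natCast_mul_shapleyWeight_pred _ (card_le_univ T)]
  exact card_pos.2 (nonempty_iff_ne_empty.2 (ne_of_mem_erase hT))

theorem sum_sum_shapleyWeight_mul :
    ∑ i, ∑ S ∈ (univ.erase i).powerset, shapleyWeight (Fintype.card ι) #S * v S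
      = ∑ T ∈ univ.erase univ, coalitionWeight (Fintype.card ι) #T * v T := by
  rw [sum_sum_powerset_erase, ← sum_erase (a := univ) _ (by simp)]
  refine sum_congr rfl fun T hT => ?_
  rw [nsmul_eq_mul, ← mul_assoc, natCast_sub_mul_shapleyWeight]
  exact (card_lt_iff_ne_univ T).2 (ne_of_mem_erase hT)

end Marginals

theorem shapley_efficiency_general {ι : Type*} [Fintype ι] [DecidableEq ι]
    (v : Finset ι → ℝ) :
    ∑ i : ι, ∑ S ∈ ((univ : Finset ι).erase i).powerset,
        ((S.card.factorial * (Fintype.card ι - 1 - S.card).factorial : ℕ) : ℝ) /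
            ((Fintype.card ι).factorial : ℝ) *
          (v (insert i S) - v S)
      = v univ - v ∅ := by
  change ∑ i, ∑ S ∈ (univ.erase i).powerset,
      shapleyWeight (Fintype.card ι) #S * (v (insert i S) - v S) = _
  set c : Finset ι → ℝ := fun T => coalitionWeight (Fintype.card ι) #T * v T
  have hc_empty : c ∅ = v ∅ := by simp [c, coalitionWeight_zero]
  have hc_univ : c univ = v univ := by simp [c, coalitionWeight_self]
  simp_rw [mul_sub, sum_sub_distrib]
  rw [sum_sum_shapleyWeight_mul_insert, sum_sum_shapleyWeight_mul]
  linear_combination sum_erase_add univ c (mem_univ ∅) - sum_erase_add univ c (mem_univ univ)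
    + hc_univ - hc_empty

/-- Efficiency of the Shapley value: for any finite set `N` of players
with `n = |N| ≥ 1` and any set function `v : 𝒫(N) → ℝ`, the Shapley values sum to
`v(N) − v(∅)`. -/
theorem shapley_efficiency {ι : Type*} [Fintype ι] [DecidableEq ι]
    (hn : 1 ≤ Fintype.card ι) (v : Finset ι → ℝ) :
    ∑ i : ι, ∑ S ∈ ((univ : Finset ι).erase i).powerset,
        ((S.card.factorial * (Fintype.card ι - 1 - S.card).factorial : ℕ) : ℝ) /
            ((Fintype.card ι).factorial : ℝ) *
          (v (insert i S) - v S)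
      = v univ - v ∅ :=
  shapley_efficiency_general v
end

section
/- Let σ : ℝ → ℝ be a polynomial, s ∈ ℝ, z ∈ ℝⁿ, and set y = σ(∑_{j∈N} z_j + s), ỹ = σ(s). Let N⁺ = {j : z_j > 0} and N⁻ = {j : z_j ≤ 0}, and assume ∑_{j ∈ N⁺} z_j ≠ 0. Then for every i ∈ N⁺ and every α ∈ ℝ, the LRP-αβ attribution a_i = α · (z_i / ∑_{j∈N⁺} z_j) · (y − ỹ) satisfies a_i = α·[ ∑_{κ ∈ Ω_i} φ(κ) + ∑_{S ⊆ N, |S| > 1, i ∈ S} ∑_{κ ∈ Ω_S} (κ_i / ∑_{j∈N⁺} κ_j) · I(κ) + ∑_{∅ ≠ S ⊆ N⁻} ∑_{κ ∈ Ω_S} (z_i / ∑_{j∈N⁺} z_j) · I(κ) ]. -/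
open Finset

/-- The Taylor interaction effect `I(κ)` of the one-layer module
`g(u) = σ(∑ⱼ uⱼ + s)` expanded at the baseline `0` and evaluated at `z`:
`I(κ) = (σ^{(|κ|)}(s)/|κ|!) · (|κ|!/∏ⱼ κⱼ!) · ∏ⱼ zⱼ^{κⱼ}`. -/
noncomputable def taylorEffect {n : ℕ} (σ : Polynomial ℝ) (s : ℝ) (z : Fin n → ℝ)
    (κ : Fin n → ℕ) : ℝ :=
  ((Polynomial.derivative^[∑ j, κ j] σ).eval s / ((∑ j, κ j).factorial : ℝ)) *
    ((Nat.multinomial Finset.univ κ : ℕ) : ℝ) * ∏ j, z j ^ κ j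

/-!
Expand `σ(∑ zⱼ + s)` into the finitely many nonzero Taylor effects `I(κ)` and write
`K(κ) = ∑_{j ∈ N⁺} κⱼ`. Per multi-index, the three sums on the right collect
`(κᵢ / K(κ)) · I(κ)` over all `κ` (the ratio is `0` when `K(κ) = 0`, since `x / 0 = 0`) and
`(zᵢ / Z) · I(κ)` over the nonzero `κ` supported in `N⁻`, where `Z = ∑_{j ∈ N⁺} zⱼ`. The left side
splits the same way, `y - ỹ = ∑_κ (K(κ)/K(κ)) · I(κ) + ∑_{0 ≠ κ ⊆ N⁻} I(κ)`, so it remains to show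
`Z · ∑_κ (κᵢ / K(κ)) · I(κ) = zᵢ · ∑_κ (K(κ)/K(κ)) · I(κ)`.

For `t ∈ N⁺`, substituting `κ = μ + eₜ` turns `κₜ · I_σ(κ)` into `zₜ · I_{σ'}(μ)` (the Taylor
effects of `σ'` are the partial derivatives of those of `σ`) and `K(κ)` into `K(μ) + 1`. Hence
`∑_κ (κₜ / K(κ)) · I(κ) = zₜ · A` with `A` independent of `t`; summing over `t ∈ N⁺` gives both
sides of the required identity as `zᵢ · Z · A`.
-/

open Polynomial

def multiIndicesOfDegreeLE (n d : ℕ) : Finset (Fin n → ℕ) :=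
  (range (d + 1)).biUnion fun m => piAntidiag univ m

lemma mem_multiIndicesOfDegreeLE {n d : ℕ} {κ : Fin n → ℕ} :
    κ ∈ multiIndicesOfDegreeLE n d ↔ ∑ j, κ j ≤ d := by
  simp [multiIndicesOfDegreeLE, mem_piAntidiag]

lemma Nat.add_one_mul_multinomial_add_single {ι : Type*} [DecidableEq ι] {s : Finset ι}
    {i : ι} (hi : i ∈ s) (μ : ι → ℕ) :
    (μ i + 1) * Nat.multinomial s (μ + Pi.single i 1)
      = (∑ j ∈ s, μ j + 1) * Nat.multinomial s μ := by
  have hsum : ∑ j ∈ s, (μ + Pi.single i 1 : _ → ℕ) j = ∑ j ∈ s, μ j + 1 := by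
    simp [sum_add_distrib, sum_pi_single', hi]
  have hprod : ∏ j ∈ s, ((μ + Pi.single i 1 : _ → ℕ) j).factorial
      = (μ i + 1) * ∏ j ∈ s, (μ j).factorial := by
    rw [← mul_prod_erase s _ hi, ← mul_prod_erase s (fun j => (μ j).factorial) hi,
      prod_congr rfl fun j hj => by
        rw [Pi.add_apply, Pi.single_eq_of_ne (ne_of_mem_erase hj), add_zero]]
    simp [Nat.factorial_succ, mul_assoc]
  apply Nat.eq_of_mul_eq_mul_left (prod_factorial_pos s μ)
  calc (∏ j ∈ s, (μ j).factorial) * ((μ i + 1) * Nat.multinomial s (μ + Pi.single i 1))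
      = (∑ j ∈ s, (μ + Pi.single i 1 : _ → ℕ) j).factorial := by
        rw [← Nat.multinomial_spec, hprod]; ring
    _ = _ := by rw [hsum, Nat.factorial_succ, ← Nat.multinomial_spec]; ring

lemma tsum_eq_tsum_add_single {ι M : Type*} [DecidableEq ι] [AddCommMonoid M] [TopologicalSpace M]
    {f : (ι → ℕ) → M} (i : ι) (hf : ∀ κ, κ i = 0 → f κ = 0) :
    ∑' κ, f κ = ∑' μ : ι → ℕ, f (μ + Pi.single i 1) := by
  refine ((add_left_injective _).tsum_eq fun κ hκ => ⟨κ - Pi.single i 1, ?_⟩).symm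
  refine tsub_add_cancel_of_le fun j => ?_
  rcases eq_or_ne j i with rfl | hj
  · simpa [Nat.one_le_iff_ne_zero] using fun h => hκ (hf κ h)
  · simp [hj]

lemma Finset.sum_tsum_ite_eq {α β M : Type*} [DecidableEq β] [AddCommMonoid M] [TopologicalSpace M]
    [T2Space M] [ContinuousAdd M] (g : α → β) (𝒮 : Finset β) (f : α → M)
    (hf : ∀ S ∈ 𝒮, Summable fun a => if g a = S then f a else 0) :
    ∑ S ∈ 𝒮, ∑' a, (if g a = S then f a else 0) = ∑' a, if g a ∈ 𝒮 then f a else 0 := by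
  rw [← Summable.tsum_finsetSum hf]
  exact tsum_congr fun a => sum_ite_eq 𝒮 (g a) _

lemma ite_eq_singleton_add_ite_mem {ι : Type*} [Fintype ι] [DecidableEq ι] {P : Finset ι}
    {i : ι} (hi : i ∈ P) (κ : ι → ℕ) (x : ℝ) :
    (if univ.filter (fun j => κ j ≠ 0) = {i} then x else 0)
      + (if univ.filter (fun j => κ j ≠ 0) ∈
            (univ : Finset ι).powerset.filter (fun S => 1 < S.card ∧ i ∈ S)
          then (κ i : ℝ) / (∑ j ∈ P, (κ j : ℝ)) * x else 0)
      = (κ i : ℝ) / (∑ j ∈ P, (κ j : ℝ)) * x := by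
  by_cases hsingle : univ.filter (fun j => κ j ≠ 0) = {i}
  · have hκ : ∀ j, κ j ≠ 0 ↔ j = i := fun j => by
      simpa using congrArg (j ∈ ·) hsingle
    have hsum : ∑ j ∈ P, (κ j : ℝ) = κ i :=
      sum_eq_single_of_mem i hi fun j _ hj => by simpa using (hκ j).not.2 hj
    have hκi : (κ i : ℝ) ≠ 0 := by exact_mod_cast (hκ i).2 rfl
    simp [hsingle, hsum, hκi]
  · by_cases hκi : κ i = 0
    · rw [if_neg hsingle]
      simp [hκi]
    · have hmem : i ∈ univ.filter (fun j => κ j ≠ 0) := by simpa using hκi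
      have hcard : 1 < (univ.filter (fun j => κ j ≠ 0)).card :=
        one_lt_card_iff_nontrivial.2 ((eq_singleton_or_nontrivial hmem).resolve_left hsingle)
      simp [hsingle, hcard, hκi]

lemma ite_eq_zero_eq_div_self_add_ite_mem {ι : Type*} [Fintype ι] [DecidableEq ι]
    (P : Finset ι) (κ : ι → ℕ) (x : ℝ) :
    (if κ = 0 then 0 else x)
      = (∑ j ∈ P, (κ j : ℝ)) / (∑ j ∈ P, (κ j : ℝ)) * x
        + (if univ.filter (fun j => κ j ≠ 0) ∈ Pᶜ.powerset.filter (fun S => S.Nonempty)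
            then x else 0) := by
  have hzero : ∑ j ∈ P, (κ j : ℝ) = 0 ↔ univ.filter (fun j => κ j ≠ 0) ⊆ Pᶜ := by
    rw [sum_eq_zero_iff_of_nonneg fun _ _ => Nat.cast_nonneg _]
    simp only [Nat.cast_eq_zero, subset_iff, mem_filter, mem_univ, true_and, mem_compl]
    exact ⟨fun h j hj hjP => hj (h j hjP), fun h j hjP => not_not.1 fun hj => h hj hjP⟩
  have hne : (univ.filter (fun j => κ j ≠ 0)).Nonempty ↔ κ ≠ 0 := by
    simp [filter_nonempty_iff, funext_iff]
  by_cases hK : ∑ j ∈ P, (κ j : ℝ) = 0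
  · simp [hK, hzero.1 hK, hne, ite_not]
  · have hκ : κ ≠ 0 := by rintro rfl; simp at hK
    simp [hK, hκ, hzero.not.1 hK]

lemma Polynomial.taylor_coeff_eq_eval_iterate_derivative_div {K : Type*} [Field K] [CharZero K]
    (p : K[X]) (r : K) (m : ℕ) :
    (taylor r p).coeff m = (derivative^[m] p).eval r / m.factorial := by
  rw [taylor_coeff, ← factorial_smul_hasseDeriv, LinearMap.smul_apply, eval_smul, nsmul_eq_mul,
    mul_div_cancel_left₀ _ (Nat.cast_ne_zero.2 m.factorial_ne_zero)]

section TaylorEffect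

variable {n : ℕ} (σ : ℝ[X]) (s : ℝ) (z : Fin n → ℝ)

lemma taylorEffect_eq_zero_of_natDegree_lt {κ : Fin n → ℕ} (h : σ.natDegree < ∑ j, κ j) :
    taylorEffect σ s z κ = 0 := by
  simp [taylorEffect, iterate_derivative_eq_zero h]

lemma taylorEffect_eq_zero_of_notMem {κ : Fin n → ℕ}
    (h : κ ∉ multiIndicesOfDegreeLE n σ.natDegree) : taylorEffect σ s z κ = 0 :=
  taylorEffect_eq_zero_of_natDegree_lt σ s z (by rw [mem_multiIndicesOfDegreeLE] at h; omega)

lemma summable_of_taylorEffect_eq_zero {F : (Fin n → ℕ) → ℝ}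
    (hF : ∀ κ, taylorEffect σ s z κ = 0 → F κ = 0) : Summable F :=
  summable_of_hasFiniteSupport <| (multiIndicesOfDegreeLE n σ.natDegree).finite_toSet.subset
    fun κ hκ => by_contra fun h => hκ (hF κ (taylorEffect_eq_zero_of_notMem σ s z h))

lemma taylorEffect_zero : taylorEffect σ s z 0 = σ.eval s := by
  have : Nat.multinomial (univ : Finset (Fin n)) 0 = 1 := by
    simpa using Nat.multinomial_spec (univ : Finset (Fin n)) 0
  simp [taylorEffect, this]

theorem eval_sum_add_eq_tsum_taylorEffect :
    σ.eval (∑ j, z j + s) = ∑' κ, taylorEffect σ s z κ := by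
  have hdisj : ((range (σ.natDegree + 1) : Finset ℕ) : Set ℕ).PairwiseDisjoint
      fun m => piAntidiag (univ : Finset (Fin n)) m := by
    intro a _ b _ hab
    simp only [Function.onFun, disjoint_left, mem_piAntidiag]
    exact fun κ ha hb => hab (ha.1 ▸ hb.1)
  rw [tsum_eq_sum fun κ => taylorEffect_eq_zero_of_notMem σ s z, multiIndicesOfDegreeLE,
    sum_biUnion hdisj, ← taylor_eval, eval_eq_sum_range, natDegree_taylor]
  refine sum_congr rfl fun m _ => ?_
  rw [taylor_coeff_eq_eval_iterate_derivative_div, sum_pow_eq_sum_piAntidiag, mul_sum]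
  refine sum_congr rfl fun κ hκ => ?_
  rw [taylorEffect, (mem_piAntidiag.1 hκ).1]
  ring

lemma add_one_mul_taylorEffect_add_single (μ : Fin n → ℕ) (i : Fin n) :
    (μ i + 1 : ℝ) * taylorEffect σ s z (μ + Pi.single i 1)
      = z i * taylorEffect (derivative σ) s z μ := by
  have hsum : ∑ j, (μ + Pi.single i 1 : _ → ℕ) j = ∑ j, μ j + 1 := by simp [sum_add_distrib]
  have hmult : ((μ i + 1 : ℕ) : ℝ) * Nat.multinomial univ (μ + Pi.single i 1)
      = ((∑ j, μ j + 1 : ℕ) : ℝ) * Nat.multinomial univ μ := by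
    exact_mod_cast Nat.add_one_mul_multinomial_add_single (mem_univ i) μ
  have hprod : ∏ j, z j ^ (μ + Pi.single i 1 : _ → ℕ) j = z i * ∏ j, z j ^ μ j := by
    simp only [Pi.add_apply, pow_add, prod_mul_distrib]
    have hzi : ∏ j, z j ^ (Pi.single i 1 : Fin n → ℕ) j = z i := by
      rw [Fintype.prod_eq_single i fun j hj => by rw [Pi.single_eq_of_ne hj, pow_zero]]
      simp
    rw [hzi, mul_comm]
  unfold taylorEffect
  rw [hsum, Function.iterate_succ_apply, Nat.factorial_succ, hprod]
  push_cast at hmult ⊢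
  field_simp
  linear_combination (derivative^[∑ j, μ j] (derivative σ)).eval s * z i * (∏ j, z j ^ μ j) * hmult

lemma tsum_div_mul_taylorEffect (P : Finset (Fin n)) {t : Fin n} (ht : t ∈ P) :
    ∑' κ, (κ t : ℝ) / (∑ j ∈ P, (κ j : ℝ)) * taylorEffect σ s z κ
      = z t * ∑' μ, taylorEffect (derivative σ) s z μ / (∑ j ∈ P, (μ j : ℝ) + 1) := by
  rw [tsum_eq_tsum_add_single t fun κ h => by simp [h], ← tsum_mul_left]
  refine tsum_congr fun μ => ?_
  have hP : ∑ j ∈ P, ((μ + Pi.single t 1 : _ → ℕ) j : ℝ) = ∑ j ∈ P, (μ j : ℝ) + 1 := by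
    simp [sum_add_distrib, Pi.single_apply, ht]
  rw [hP, div_mul_eq_mul_div, Pi.add_apply, Pi.single_eq_same, Nat.cast_add, Nat.cast_one,
    add_one_mul_taylorEffect_add_single]
  ring

theorem sum_mul_tsum_div_mul_taylorEffect (P : Finset (Fin n)) {i : Fin n} (hi : i ∈ P) :
    (∑ j ∈ P, z j) * ∑' κ, (κ i : ℝ) / (∑ j ∈ P, (κ j : ℝ)) * taylorEffect σ s z κ
      = z i * ∑' κ, (∑ j ∈ P, (κ j : ℝ)) / (∑ j ∈ P, (κ j : ℝ)) * taylorEffect σ s z κ := by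
  have hsplit : ∑' κ, (∑ j ∈ P, (κ j : ℝ)) / (∑ j ∈ P, (κ j : ℝ)) * taylorEffect σ s z κ
      = ∑ t ∈ P, ∑' κ, (κ t : ℝ) / (∑ j ∈ P, (κ j : ℝ)) * taylorEffect σ s z κ := by
    rw [← Summable.tsum_finsetSum fun t _ =>
      summable_of_taylorEffect_eq_zero σ s z fun κ h => by simp [h]]
    exact tsum_congr fun κ => by rw [sum_div, sum_mul]
  rw [hsplit, sum_congr rfl fun t ht => tsum_div_mul_taylorEffect σ s z P ht, ← sum_mul,
    tsum_div_mul_taylorEffect σ s z P hi]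
  ring

theorem eval_sum_add_sub_eval_eq (P : Finset (Fin n)) :
    σ.eval (∑ j, z j + s) - σ.eval s
      = ∑' κ, (∑ j ∈ P, (κ j : ℝ)) / (∑ j ∈ P, (κ j : ℝ)) * taylorEffect σ s z κ
        + ∑' κ, if univ.filter (fun j => κ j ≠ 0) ∈ Pᶜ.powerset.filter (fun S => S.Nonempty)
            then taylorEffect σ s z κ else 0 := by
  rw [eval_sum_add_eq_tsum_taylorEffect,
    (summable_of_taylorEffect_eq_zero σ s z fun _ h => h).tsum_eq_add_tsum_ite 0,
    taylorEffect_zero, add_sub_cancel_left,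
    ← (summable_of_taylorEffect_eq_zero σ s z fun _ h => by simp [h]).tsum_add
      (summable_of_taylorEffect_eq_zero σ s z fun _ h => by simp [h])]
  exact tsum_congr fun κ => ite_eq_zero_eq_div_self_add_ite_mem P κ _

theorem tsum_ite_add_sum_tsum_ite_eq {P : Finset (Fin n)} {i : Fin n} (hi : i ∈ P) :
    (∑' κ : Fin n → ℕ,
        if univ.filter (fun j => κ j ≠ 0) = {i} then taylorEffect σ s z κ else 0)
      + (∑ S ∈ (univ : Finset (Fin n)).powerset.filter (fun S => 1 < S.card ∧ i ∈ S),
          ∑' κ : Fin n → ℕ, if univ.filter (fun j => κ j ≠ 0) = S then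
            (κ i : ℝ) / (∑ j ∈ P, (κ j : ℝ)) * taylorEffect σ s z κ else 0)
      = ∑' κ, (κ i : ℝ) / (∑ j ∈ P, (κ j : ℝ)) * taylorEffect σ s z κ := by
  rw [sum_tsum_ite_eq _ _ _ fun S _ =>
      summable_of_taylorEffect_eq_zero σ s z fun _ h => by simp [h],
    ← (summable_of_taylorEffect_eq_zero σ s z fun _ h => by simp [h]).tsum_add
      (summable_of_taylorEffect_eq_zero σ s z fun _ h => by simp [h])]
  exact tsum_congr fun κ => ite_eq_singleton_add_ite_mem hi κ _

theorem sum_tsum_ite_eq_mul_taylorEffect (𝒮 : Finset (Finset (Fin n))) (c : ℝ) :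
    ∑ S ∈ 𝒮, ∑' κ : Fin n → ℕ,
        (if univ.filter (fun j => κ j ≠ 0) = S then c * taylorEffect σ s z κ else 0)
      = c * ∑' κ, if univ.filter (fun j => κ j ≠ 0) ∈ 𝒮 then taylorEffect σ s z κ else 0 := by
  rw [sum_tsum_ite_eq _ _ _ fun S _ =>
      summable_of_taylorEffect_eq_zero σ s z fun _ h => by simp [h],
    ← tsum_mul_left]
  simp_rw [mul_ite, mul_zero]

end TaylorEffect

theorem lrp_alpha_beta_pos_general {n : ℕ} (σ : Polynomial ℝ) (s : ℝ)
    (z : Fin n → ℝ)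
    (hNp : ∑ j ∈ univ.filter (fun j => 0 < z j), z j ≠ 0)
    (i : Fin n) (hi : 0 < z i) (α : ℝ) :
    α * (z i / ∑ j ∈ univ.filter (fun j => 0 < z j), z j) *
        (σ.eval (∑ j, z j + s) - σ.eval s)
      = α * (
          (∑' κ : Fin n → ℕ,
              if univ.filter (fun j => κ j ≠ 0) = {i} then taylorEffect σ s z κ else 0)
        + (∑ S ∈ (univ : Finset (Fin n)).powerset.filter (fun S => 1 < S.card ∧ i ∈ S),
            ∑' κ : Fin n → ℕ,
              if univ.filter (fun j => κ j ≠ 0) = S then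
                ((κ i : ℝ) / ∑ j ∈ univ.filter (fun j => 0 < z j), (κ j : ℝ)) *
                  taylorEffect σ s z κ
              else 0)
        + (∑ S ∈ (univ.filter (fun j => z j ≤ 0)).powerset.filter (fun S => S.Nonempty),
            ∑' κ : Fin n → ℕ,
              if univ.filter (fun j => κ j ≠ 0) = S then
                (z i / ∑ j ∈ univ.filter (fun j => 0 < z j), z j) *
                  taylorEffect σ s z κ
              else 0)) := by
  set P := univ.filter (fun j => 0 < z j)
  have hiP : i ∈ P := mem_filter.2 ⟨mem_univ i, hi⟩
  have hN : univ.filter (fun j => z j ≤ 0) = Pᶜ := by ext j; simp [P]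
  have hkey : ∑' κ, (κ i : ℝ) / (∑ j ∈ P, (κ j : ℝ)) * taylorEffect σ s z κ
      = z i / (∑ j ∈ P, z j) *
          ∑' κ, (∑ j ∈ P, (κ j : ℝ)) / (∑ j ∈ P, (κ j : ℝ)) * taylorEffect σ s z κ := by
    rw [div_mul_eq_mul_div, eq_div_iff hNp, mul_comm]
    exact sum_mul_tsum_div_mul_taylorEffect σ s z P hiP
  rw [eval_sum_add_sub_eval_eq σ s z P, tsum_ite_add_sum_tsum_ite_eq σ s z hiP, hN,
    sum_tsum_ite_eq_mul_taylorEffect, hkey]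
  ring

/-- LRP-αβ, positive group.  For a polynomial activation `σ`, with
`y = σ(∑ⱼ zⱼ + s)`, `ỹ = σ(s)`, `N⁺ = {j : zⱼ > 0}`, `N⁻ = {j : zⱼ ≤ 0}` and
`∑_{j∈N⁺} zⱼ ≠ 0`: for every `i ∈ N⁺` and every `α ∈ ℝ`, the LRP-αβ attribution
`aᵢ = α·(zᵢ/∑_{j∈N⁺} zⱼ)·(y − ỹ)` decomposes into Taylor independent and interaction
effects with the stated allocation ratios. -/
theorem lrp_alpha_beta_pos {n : ℕ} (hn : 1 ≤ n) (σ : Polynomial ℝ) (s : ℝ)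
    (z : Fin n → ℝ)
    (hNp : ∑ j ∈ univ.filter (fun j => 0 < z j), z j ≠ 0)
    (i : Fin n) (hi : 0 < z i) (α : ℝ) :
    α * (z i / ∑ j ∈ univ.filter (fun j => 0 < z j), z j) *
        (σ.eval (∑ j, z j + s) - σ.eval s)
      = α * (
          (∑' κ : Fin n → ℕ,
              if univ.filter (fun j => κ j ≠ 0) = {i} then taylorEffect σ s z κ else 0)
        + (∑ S ∈ (univ : Finset (Fin n)).powerset.filter (fun S => 1 < S.card ∧ i ∈ S),
            ∑' κ : Fin n → ℕ,
              if univ.filter (fun j => κ j ≠ 0) = S then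
                ((κ i : ℝ) / ∑ j ∈ univ.filter (fun j => 0 < z j), (κ j : ℝ)) *
                  taylorEffect σ s z κ
              else 0)
        + (∑ S ∈ (univ.filter (fun j => z j ≤ 0)).powerset.filter (fun S => S.Nonempty),
            ∑' κ : Fin n → ℕ,
              if univ.filter (fun j => κ j ≠ 0) = S then
                (z i / ∑ j ∈ univ.filter (fun j => 0 < z j), z j) *
                  taylorEffect σ s z κ
              else 0)) :=
  lrp_alpha_beta_pos_general σ s z hNp i hi α
end

section
/- Let σ : ℝ → ℝ be continuously differentiable, W ∈ ℝⁿ, s ∈ ℝ, and define g : ℝⁿ → ℝ by g(u) = σ(∑_{j} W_j u_j + s). Let x, x̃ ∈ ℝⁿ with Δ := ∑_{j} W_j (x_j − x̃_j) ≠ 0. Then for every i, the Integrated Gradients attribution for g from baseline x̃ equals the DeepLIFT Rescale attribution: (x_i − x̃_i) · ∫_0^1 (∂g/∂u_i)(x̃ + α(x − x̃)) dα = (W_i (x_i − x̃_i) / Δ) · (g(x) − g(x̃)). -/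
/-!
On the straight path from `x̃` to `x` the argument of `σ` is affine in `α` with slope
`Δ = L (x - x̃)`, so the derivative of `u ↦ σ (L u + s)` in direction `v` is `σ' (A + Δ α) · L v`.
By the fundamental theorem of calculus its integral over `[0, 1]` is `L v · (σ (A + Δ) - σ A) / Δ`,
which is the Rescale multiplier. The theorem is the case `L u = ∑ⱼ Wⱼ uⱼ`, `v = eᵢ`.
-/

open Finset

section RidgeFunction

variable {E : Type*} [NormedAddCommGroup E] [NormedSpace ℝ E] {σ : ℝ → ℝ}

theorem hasFDerivAt_comp_clm_add_const {L : E →L[ℝ] ℝ} {s : ℝ} {u : E}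
    (hσ : DifferentiableAt ℝ σ (L u + s)) :
    HasFDerivAt (fun u => σ (L u + s)) (deriv σ (L u + s) • L) u :=
  hσ.hasDerivAt.comp_hasFDerivAt u (L.hasFDerivAt.add_const s)

theorem integral_deriv_comp_add_mul (hσ : ContDiff ℝ 1 σ) (a : ℝ) {d : ℝ} (hd : d ≠ 0) :
    ∫ α in (0:ℝ)..1, deriv σ (a + d * α) = (σ (a + d) - σ a) / d := by
  rw [intervalIntegral.integral_comp_add_mul _ hd,
    intervalIntegral.integral_deriv_eq_sub (fun y _ => hσ.differentiable one_ne_zero y)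
      ((hσ.continuous_deriv le_rfl).intervalIntegrable _ _)]
  simp [div_eq_inv_mul]

theorem integral_fderiv_comp_clm_add_const_segment (hσ : ContDiff ℝ 1 σ) (L : E →L[ℝ] ℝ)
    (s : ℝ) {x y : E} (hxy : L (x - y) ≠ 0) (v : E) :
    ∫ α in (0:ℝ)..1, fderiv ℝ (fun u => σ (L u + s)) (y + α • (x - y)) v
      = L v / L (x - y) * (σ (L x + s) - σ (L y + s)) := by
  have hpath : ∀ α : ℝ, L (y + α • (x - y)) + s = (L y + s) + L (x - y) * α := fun α => by
    simp only [map_add, map_smul, smul_eq_mul]; ring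
  have hx : L x + s = (L y + s) + L (x - y) := by simp only [map_sub]; ring
  simp_rw [(hasFDerivAt_comp_clm_add_const (hσ.differentiable one_ne_zero _)).fderiv,
    smul_apply, smul_eq_mul, hpath, intervalIntegral.integral_mul_const,
    integral_deriv_comp_add_mul hσ _ hxy, hx]
  ring

end RidgeFunction

def weightedSumCLM {n : ℕ} (W : Fin n → ℝ) : (Fin n → ℝ) →L[ℝ] ℝ :=
  ∑ j, W j • ContinuousLinearMap.proj j

@[simp]
theorem weightedSumCLM_apply {n : ℕ} (W u : Fin n → ℝ) :
    weightedSumCLM W u = ∑ j, W j * u j := by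
  simp [weightedSumCLM]

theorem integrated_gradients_eq_deeplift_rescale_general {n : ℕ}
    (σ : ℝ → ℝ) (hσ : ContDiff ℝ 1 σ) (W : Fin n → ℝ) (s : ℝ) (x xt : Fin n → ℝ)
    (hΔ : ∑ j, W j * (x j - xt j) ≠ 0) (i : Fin n) :
    (x i - xt i) *
        ∫ α in (0:ℝ)..1,
          fderiv ℝ (fun u : Fin n → ℝ => σ (∑ j, W j * u j + s))
            (fun j => xt j + α * (x j - xt j)) (Pi.single i 1)
      = (W i * (x i - xt i) / ∑ j, W j * (x j - xt j)) *
          (σ (∑ j, W j * x j + s) - σ (∑ j, W j * xt j + s)) := by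
  have hIG := integral_fderiv_comp_clm_add_const_segment hσ (weightedSumCLM W) s
    (x := x) (y := xt) (by simpa using hΔ) (Pi.single i 1)
  simp only [weightedSumCLM_apply, Pi.sub_apply, Pi.single_apply, mul_ite, mul_one, mul_zero,
    sum_ite_eq', mem_univ, if_true] at hIG
  -- `fun j => xt j + α * (x j - xt j)` and `xt + α • (x - xt)` agree definitionally.
  calc _ = (x i - xt i) * _ := congrArg ((x i - xt i) * ·) hIG
    _ = _ := by ring

/-- For a continuously differentiable activation `σ` and the module
`g(u) = σ(∑ⱼ Wⱼuⱼ + s)`, with `Δ = ∑ⱼ Wⱼ(xⱼ − x̃ⱼ) ≠ 0`, the Integrated Gradients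
attribution of variable `i` from baseline `x̃` equals the DeepLIFT Rescale attribution
`(Wᵢ(xᵢ − x̃ᵢ)/Δ)·(g(x) − g(x̃))`. -/
theorem integrated_gradients_eq_deeplift_rescale {n : ℕ} (hn : 1 ≤ n)
    (σ : ℝ → ℝ) (hσ : ContDiff ℝ 1 σ) (W : Fin n → ℝ) (s : ℝ) (x xt : Fin n → ℝ)
    (hΔ : ∑ j, W j * (x j - xt j) ≠ 0) (i : Fin n) :
    (x i - xt i) *
        ∫ α in (0:ℝ)..1,
          fderiv ℝ (fun u : Fin n → ℝ => σ (∑ j, W j * u j + s))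
            (fun j => xt j + α * (x j - xt j)) (Pi.single i 1)
      = (W i * (x i - xt i) / ∑ j, W j * (x j - xt j)) *
          (σ (∑ j, W j * x j + s) - σ (∑ j, W j * xt j + s)) :=
  integrated_gradients_eq_deeplift_rescale_general σ hσ W s x xt hΔ i
end

section
/- Let σ : ℝ → ℝ be a polynomial, W ∈ ℝⁿ, s ∈ ℝ, and define g : ℝⁿ → ℝ by g(u) = σ(∑_{j} W_j u_j + s). Let x, x̃ ∈ ℝⁿ with Δ := ∑_{j} W_j (x_j − x̃_j) ≠ 0. Then for every i ∈ N, the DeepLIFT Rescale attribution a_i = (W_i (x_i − x̃_i) / Δ) · (g(x) − g(x̃)) satisfies a_i = ∑_{κ ∈ Ω_i} φ(κ) + ∑_{S ⊆ N, |S| > 1, i ∈ S} ∑_{κ ∈ Ω_S} (κ_i / ∑_{j∈N} κ_j) · I(κ), where the effects are taken for g expanded at the baseline x̃ and evaluated at x. -/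
open Finset

open Polynomial in
private lemma dlr_coeff_sum_CXpow {ι : Type*} [DecidableEq ι] (T : Finset ι) (b : ι → ℝ)
    (deg : ι → ℕ) (m : ℕ) :
    (∑ κ ∈ T, C (b κ) * X ^ (deg κ)).coeff m
      = ∑ κ ∈ T.filter (fun κ => deg κ = m), b κ := by
  rw [Polynomial.finset_sum_coeff, Finset.sum_filter]
  refine Finset.sum_congr rfl fun κ _ => ?_
  rw [Polynomial.coeff_C_mul, Polynomial.coeff_X_pow]
  rcases eq_or_ne (deg κ) m with h | h
  · simp [h]
  · simp [if_neg h, if_neg (Ne.symm h)]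

open Polynomial in
private lemma dlr_key_coeff {ι : Type*} [DecidableEq ι] (σ : Polynomial ℝ) (Δ B c : ℝ)
    (T : Finset ι) (b : ι → ℝ) (ki deg : ι → ℕ)
    (hI : ∀ t : ℝ, σ.eval (t * Δ + c) = ∑ κ ∈ T, b κ * t ^ deg κ)
    (hII : ∀ t : ℝ, ∑ κ ∈ T, (ki κ : ℝ) * b κ * t ^ deg κ
              = t * B * σ.derivative.eval (t * Δ + c))
    (m : ℕ) (hm : 1 ≤ m) :
    Δ * ∑ κ ∈ T.filter (fun κ => deg κ = m), (ki κ : ℝ) * b κ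
      = B * m * ∑ κ ∈ T.filter (fun κ => deg κ = m), b κ := by
  have hE1 : (∑ κ ∈ T, C (b κ) * X ^ deg κ) = σ.comp (C Δ * X + C c) := by
    apply Polynomial.funext
    intro t
    simp only [Polynomial.eval_finset_sum, Polynomial.eval_mul, Polynomial.eval_pow,
      Polynomial.eval_C, Polynomial.eval_X, Polynomial.eval_comp, Polynomial.eval_add]
    rw [show Δ * t + c = t * Δ + c by ring, hI t]
  have hE2 : (∑ κ ∈ T, C ((ki κ : ℝ) * b κ) * X ^ deg κ)
      = X * C B * σ.derivative.comp (C Δ * X + C c) := by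
    apply Polynomial.funext
    intro t
    simp only [Polynomial.eval_finset_sum, Polynomial.eval_mul, Polynomial.eval_pow,
      Polynomial.eval_C, Polynomial.eval_X, Polynomial.eval_comp, Polynomial.eval_add]
    rw [show Δ * t + c = t * Δ + c by ring, ← hII t]
  have hD : C Δ * (∑ κ ∈ T, C ((ki κ : ℝ) * b κ) * X ^ deg κ)
      = C B * X * Polynomial.derivative (∑ κ ∈ T, C (b κ) * X ^ deg κ) := by
    rw [hE1, hE2, Polynomial.derivative_comp]
    have h : Polynomial.derivative (C Δ * X + C c) = C Δ := by
      simp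
    rw [h]; ring
  have hc := congrArg (fun p => Polynomial.coeff p m) hD
  obtain ⟨k, rfl⟩ : ∃ k, m = k + 1 := ⟨m - 1, (Nat.succ_pred_eq_of_pos hm).symm⟩
  simp only [Polynomial.coeff_C_mul, mul_assoc, Polynomial.coeff_X_mul] at hc
  rw [Polynomial.coeff_derivative, dlr_coeff_sum_CXpow, dlr_coeff_sum_CXpow] at hc
  rw [hc]; push_cast; ring

private lemma dlr_main_aux {ι : Type*} [DecidableEq ι] (σ : Polynomial ℝ) (Δ B c : ℝ)
    (hΔ : Δ ≠ 0) (T : Finset ι) (b : ι → ℝ) (ki deg : ι → ℕ)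
    (hk : ∀ κ, ki κ ≤ deg κ)
    (hI : ∀ t : ℝ, σ.eval (t * Δ + c) = ∑ κ ∈ T, b κ * t ^ deg κ)
    (hII : ∀ t : ℝ, ∑ κ ∈ T, (ki κ : ℝ) * b κ * t ^ deg κ
              = t * B * σ.derivative.eval (t * Δ + c)) :
    B / Δ * ∑ κ ∈ T.filter (fun κ => deg κ ≠ 0), b κ
      = ∑ κ ∈ T, (ki κ : ℝ) / (deg κ) * b κ := by
  set M := T.sup deg + 1 with hM
  have hmap : ∀ κ ∈ T, deg κ ∈ Finset.range M := fun κ hκ =>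
    Finset.mem_range.2 (Nat.lt_succ_of_le (Finset.le_sup hκ))
  have hmap2 : ∀ κ ∈ T.filter (fun κ => deg κ ≠ 0), deg κ ∈ Finset.range M := fun κ hκ =>
    hmap κ (Finset.mem_filter.1 hκ).1
  rw [← Finset.sum_fiberwise_of_maps_to hmap2 b,
    ← Finset.sum_fiberwise_of_maps_to hmap (fun κ => (ki κ : ℝ) / (deg κ) * b κ),
    Finset.mul_sum]
  refine Finset.sum_congr rfl fun m _ => ?_
  rcases Nat.eq_zero_or_pos m with rfl | hm
  · rw [Finset.sum_eq_zero, Finset.sum_eq_zero, mul_zero]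
    · intro κ hκ
      have h := Finset.mem_filter.1 hκ
      have : ki κ = 0 := Nat.le_antisymm (h.2 ▸ hk κ) (Nat.zero_le _)
      simp [this]
    · intro κ hκ
      have h1 := Finset.mem_filter.1 hκ
      have h2 := Finset.mem_filter.1 h1.1
      exact absurd h1.2 h2.2
  · have hfilter : (T.filter (fun κ => deg κ ≠ 0)).filter (fun κ => deg κ = m)
        = T.filter (fun κ => deg κ = m) := by
      ext κ
      simp only [Finset.mem_filter]
      constructor
      · rintro ⟨⟨h1, -⟩, h3⟩; exact ⟨h1, h3⟩
      · rintro ⟨h1, h2⟩; exact ⟨⟨h1, by omega⟩, h2⟩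
    rw [hfilter]
    have hstar := dlr_key_coeff σ Δ B c T b ki deg hI hII m hm
    have hcongr : ∑ κ ∈ T.filter (fun κ => deg κ = m), (ki κ : ℝ) / (deg κ) * b κ
        = (∑ κ ∈ T.filter (fun κ => deg κ = m), (ki κ : ℝ) * b κ) / m := by
      rw [Finset.sum_div]
      refine Finset.sum_congr rfl fun κ hκ => ?_
      rw [(Finset.mem_filter.1 hκ).2]
      ring
    rw [hcongr]
    have hm' : (m : ℝ) ≠ 0 := Nat.cast_ne_zero.2 (by omega)
    field_simp
    linear_combination -hstar


/-- DeepLIFT Rescale.  For a polynomial activation `σ` and the module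
`g(u) = σ(∑ⱼ Wⱼuⱼ + s)` with (unique, finite) expansion `q` in powers of `x − x̃` at the
baseline `x̃`, and `Δ = ∑ⱼ Wⱼ(xⱼ − x̃ⱼ) ≠ 0`, the DeepLIFT Rescale attribution
`aᵢ = (Wᵢ(xᵢ − x̃ᵢ)/Δ)·(g(x) − g(x̃))` allocates the full independent effect of `i` and a
`κᵢ/∑ⱼκⱼ` share of every Taylor interaction effect whose receptive field contains `i`. -/
theorem deeplift_rescale {n : ℕ} (hn : 1 ≤ n) (σ : Polynomial ℝ)
    (W : Fin n → ℝ) (s : ℝ) (x xt : Fin n → ℝ)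
    (q : MvPolynomial (Fin n) ℝ)
    (hq : ∀ y : Fin n → ℝ,
      σ.eval (∑ j, W j * y j + s)
        = ∑ κ ∈ q.support, MvPolynomial.coeff κ q * ∏ j, (y j - xt j) ^ κ j)
    (hΔ : ∑ j, W j * (x j - xt j) ≠ 0) (i : Fin n) :
    (W i * (x i - xt i) / ∑ j, W j * (x j - xt j)) *
        (σ.eval (∑ j, W j * x j + s) - σ.eval (∑ j, W j * xt j + s))
      = (∑ κ ∈ q.support.filter (fun κ => κ.support = {i}),
            MvPolynomial.coeff κ q * ∏ j, (x j - xt j) ^ κ j)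
        + ∑ S ∈ (univ : Finset (Fin n)).powerset.filter (fun S => 1 < S.card ∧ i ∈ S),
            ∑ κ ∈ q.support.filter (fun κ => κ.support = S),
              ((κ i : ℝ) / ∑ j, (κ j : ℝ)) *
                (MvPolynomial.coeff κ q * ∏ j, (x j - xt j) ^ κ j) := by
  classical
  set b : (Fin n →₀ ℕ) → ℝ :=
    fun κ => MvPolynomial.coeff κ q * ∏ j, (x j - xt j) ^ κ j with hb
  set g : (Fin n →₀ ℕ) → ℝ :=
    fun κ => ((κ i : ℕ) : ℝ) / ((∑ j, κ j : ℕ) : ℝ) * b κ with hg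
  -- identity I
  have hI : ∀ t : ℝ, σ.eval (t * (∑ j, W j * (x j - xt j)) + (∑ j, W j * xt j + s))
      = ∑ κ ∈ q.support, b κ * t ^ (∑ j, κ j) := by
    intro t
    have h := hq (fun j => xt j + t * (x j - xt j))
    have harg : ∑ j, W j * (xt j + t * (x j - xt j)) + s
        = t * (∑ j, W j * (x j - xt j)) + (∑ j, W j * xt j + s) := by
      rw [Finset.sum_congr rfl fun j (_ : j ∈ univ) => show W j * (xt j + t * (x j - xt j))
          = W j * xt j + t * (W j * (x j - xt j)) by ring,
        Finset.sum_add_distrib, ← Finset.mul_sum]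
      ring
    rw [harg] at h
    rw [h]
    refine Finset.sum_congr rfl fun κ _ => ?_
    have hpow : ∀ j : Fin n, (xt j + t * (x j - xt j) - xt j) ^ κ j
        = t ^ κ j * (x j - xt j) ^ κ j := by
      intro j; rw [add_sub_cancel_left, mul_pow]
    rw [Finset.prod_congr rfl fun j _ => hpow j, Finset.prod_mul_distrib,
      Finset.prod_pow_eq_pow_sum]
    simp only [hb]
    ring
  -- identity II
  have hII : ∀ t : ℝ, ∑ κ ∈ q.support,
        ((κ i : ℕ) : ℝ) * b κ * t ^ (∑ j, κ j)
      = t * (W i * (x i - xt i)) *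
          σ.derivative.eval (t * (∑ j, W j * (x j - xt j)) + (∑ j, W j * xt j + s)) := by
    intro t
    set Δ : ℝ := ∑ j, W j * (x j - xt j) with hΔdef
    set B : ℝ := W i * (x i - xt i) with hBdef
    set c : ℝ := ∑ j, W j * xt j + s with hcdef
    set coef : (Fin n →₀ ℕ) → ℝ := fun κ =>
      MvPolynomial.coeff κ q * ((∏ j ∈ univ.erase i, (t * (x j - xt j)) ^ κ j)
        * (x i - xt i) ^ κ i) with hcoef
    have hFG : σ.comp (Polynomial.C (t * Δ - t * B + c)
          + Polynomial.C B * Polynomial.X)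
        = ∑ κ ∈ q.support, Polynomial.C (coef κ) * Polynomial.X ^ κ i := by
      apply Polynomial.funext
      intro u
      have h := hq (fun j => xt j + (if j = i then u else t) * (x j - xt j))
      have harg : ∑ j, W j * (xt j + (if j = i then u else t) * (x j - xt j)) + s
          = t * Δ - t * B + c + B * u := by
        rw [Finset.sum_congr rfl fun j (_ : j ∈ univ) =>
          show W j * (xt j + (if j = i then u else t) * (x j - xt j))
            = W j * xt j + (t * (W j * (x j - xt j))
                + (if j = i then (u - t) * (W j * (x j - xt j)) else 0)) by
            by_cases hj : j = i <;> simp [hj] <;> ring,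
          Finset.sum_add_distrib, Finset.sum_add_distrib, ← Finset.mul_sum,
          Finset.sum_ite_eq' univ i (fun j => (u - t) * (W j * (x j - xt j)))]
        simp only [Finset.mem_univ, if_true, hΔdef, hBdef, hcdef]
        ring
      rw [harg] at h
      have hprod : ∀ κ : Fin n →₀ ℕ,
          (∏ j, (xt j + (if j = i then u else t) * (x j - xt j) - xt j) ^ κ j)
            = (u * (x i - xt i)) ^ κ i
              * ∏ j ∈ univ.erase i, (t * (x j - xt j)) ^ κ j := by
        intro κ
        rw [← Finset.mul_prod_erase univ _ (Finset.mem_univ i)]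
        simp only [if_pos rfl, add_sub_cancel_left]
        congr 1
        refine Finset.prod_congr rfl fun j hj => ?_
        rw [if_neg (Finset.ne_of_mem_erase hj)]
      rw [Finset.sum_congr rfl fun κ _ => by rw [hprod κ]] at h
      simp only [Polynomial.eval_comp, Polynomial.eval_add, Polynomial.eval_mul,
        Polynomial.eval_C, Polynomial.eval_X, Polynomial.eval_finset_sum,
        Polynomial.eval_pow]
      rw [h]
      refine Finset.sum_congr rfl fun κ _ => ?_
      rw [hcoef, mul_pow]
      ring
    have hder := congrArg Polynomial.derivative hFG
    rw [Polynomial.derivative_comp] at hder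
    have hlin : Polynomial.derivative (Polynomial.C (t * Δ - t * B + c)
        + Polynomial.C B * Polynomial.X) = Polynomial.C B := by simp
    rw [hlin, map_sum] at hder
    have hder2 : ∀ κ ∈ q.support,
        Polynomial.derivative (Polynomial.C (coef κ) * Polynomial.X ^ κ i)
          = Polynomial.C (coef κ * (κ i : ℕ)) * Polynomial.X ^ (κ i - 1) := fun κ _ =>
      Polynomial.derivative_C_mul_X_pow _ _
    rw [Finset.sum_congr rfl hder2] at hder
    have hev := congrArg (Polynomial.eval t) hder
    simp only [Polynomial.eval_mul, Polynomial.eval_comp, Polynomial.eval_add,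
      Polynomial.eval_C, Polynomial.eval_X, Polynomial.eval_finset_sum,
      Polynomial.eval_pow] at hev
    have hev' := congrArg (fun z => t * z) hev
    simp only [Finset.mul_sum] at hev'
    have hterm : ∀ κ : Fin n →₀ ℕ,
        t * (coef κ * (κ i : ℕ) * t ^ (κ i - 1))
          = ((κ i : ℕ) : ℝ) * b κ * t ^ (∑ j, κ j) := by
      intro κ
      rcases Nat.eq_zero_or_pos (κ i) with h0 | h0
      · simp [h0, hb]
      · have hpow : t * t ^ (κ i - 1) = t ^ κ i := by
          conv_rhs => rw [show κ i = (κ i - 1) + 1 from (Nat.succ_pred_eq_of_pos h0).symm]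
          rw [pow_succ]; ring
        have hsplit : (∏ j, (x j - xt j) ^ κ j) * t ^ (∑ j, κ j)
            = ((∏ j ∈ univ.erase i, (t * (x j - xt j)) ^ κ j)
                * (x i - xt i) ^ κ i) * t ^ κ i := by
          have h1 : (∏ j, (t * (x j - xt j)) ^ κ j)
              = (t * (x i - xt i)) ^ κ i
                * ∏ j ∈ univ.erase i, (t * (x j - xt j)) ^ κ j :=
            (Finset.mul_prod_erase univ _ (Finset.mem_univ i)).symm
          calc (∏ j, (x j - xt j) ^ κ j) * t ^ (∑ j, κ j)
              = ∏ j, (t * (x j - xt j)) ^ κ j := by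
                rw [Finset.prod_congr rfl fun j (_ : j ∈ univ) =>
                  mul_pow t (x j - xt j) (κ j), Finset.prod_mul_distrib,
                  Finset.prod_pow_eq_pow_sum]
                ring
            _ = (t * (x i - xt i)) ^ κ i
                * ∏ j ∈ univ.erase i, (t * (x j - xt j)) ^ κ j := h1
            _ = _ := by rw [mul_pow]; ring
        rw [hcoef, hb]
        calc t * (MvPolynomial.coeff κ q
                * ((∏ j ∈ univ.erase i, (t * (x j - xt j)) ^ κ j)
                * (x i - xt i) ^ κ i) * (κ i : ℕ) * t ^ (κ i - 1))
            = ((κ i : ℕ) : ℝ) * (MvPolynomial.coeff κ q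
                * (((∏ j ∈ univ.erase i, (t * (x j - xt j)) ^ κ j)
                * (x i - xt i) ^ κ i) * (t * t ^ (κ i - 1)))) := by ring
          _ = _ := by rw [hpow, ← hsplit]; ring
    rw [Finset.sum_congr rfl fun κ _ => hterm κ] at hev'
    rw [show t * Δ + c = t * Δ - t * B + c + B * t by ring]
    linear_combination -hev'
  -- value at baseline
  have hgxt : σ.eval (∑ j, W j * xt j + s) = MvPolynomial.coeff 0 q := by
    rw [hq xt]
    have hz : ∀ κ ∈ q.support, κ ≠ 0 →
        MvPolynomial.coeff κ q * ∏ j, (xt j - xt j) ^ κ j = 0 := by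
      intro κ _ hκ
      obtain ⟨j, hj⟩ : ∃ j, κ j ≠ 0 := by
        by_contra hc
        push_neg at hc
        exact hκ (Finsupp.ext fun j => hc j)
      rw [Finset.prod_eq_zero (Finset.mem_univ j)
        (by rw [sub_self]; exact zero_pow hj)]
      ring
    rw [Finset.sum_eq_single 0 hz
      (fun h0 => by rw [MvPolynomial.notMem_support_iff.1 h0, zero_mul])]
    simp
  -- subtract baseline
  have hsub : ∑ κ ∈ q.support, b κ - MvPolynomial.coeff 0 q
      = ∑ κ ∈ q.support.filter (fun κ => (∑ j, κ j) ≠ 0), b κ := by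
    have hsplit := Finset.sum_filter_add_sum_filter_not q.support
      (fun κ => (∑ j, κ j) ≠ 0) b
    have hz : ∑ κ ∈ q.support.filter (fun κ => ¬(∑ j, κ j) ≠ 0), b κ
        = MvPolynomial.coeff 0 q := by
      have hfe : q.support.filter (fun κ => ¬(∑ j, κ j) ≠ 0)
          = q.support.filter (fun κ => κ = 0) := by
        ext κ
        simp only [Finset.mem_filter, not_not]
        constructor
        · rintro ⟨h1, h2⟩
          refine ⟨h1, Finsupp.ext fun j => ?_⟩
          exact Finset.sum_eq_zero_iff.1 h2 j (Finset.mem_univ j)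
        · rintro ⟨h1, rfl⟩
          exact ⟨h1, by simp⟩
      rw [hfe, Finset.filter_eq']
      split_ifs with h0
      · simp [hb]
      · simp [MvPolynomial.notMem_support_iff.1 h0]
    linarith [hsplit, hz]
  -- main identity
  have hk : ∀ κ : Fin n →₀ ℕ, κ i ≤ ∑ j, κ j :=
    fun κ => Finset.single_le_sum (f := fun j => κ j) (fun _ _ => Nat.zero_le _)
      (Finset.mem_univ i)
  have hmain := dlr_main_aux σ (∑ j, W j * (x j - xt j)) (W i * (x i - xt i))
    (∑ j, W j * xt j + s) hΔ q.support b (fun κ => κ i) (fun κ => ∑ j, κ j)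
    hk hI hII
  -- reshape the S-indexed double sum
  have h7a : ∑ S ∈ (univ : Finset (Fin n)).powerset.filter (fun S => 1 < S.card ∧ i ∈ S),
        ∑ κ ∈ q.support.filter (fun κ => κ.support = S),
          ((κ i : ℝ) / ∑ j, (κ j : ℝ)) * b κ
      = ∑ κ ∈ q.support.filter (fun κ => 1 < κ.support.card ∧ i ∈ κ.support),
          ((κ i : ℝ) / ∑ j, (κ j : ℝ)) * b κ := by
    have hmaps : ∀ κ ∈ q.support.filter (fun κ => 1 < κ.support.card ∧ i ∈ κ.support),
        κ.support ∈ (univ : Finset (Fin n)).powerset.filter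
          (fun S => 1 < S.card ∧ i ∈ S) := by
      intro κ hκ
      have h := Finset.mem_filter.1 hκ
      exact Finset.mem_filter.2 ⟨Finset.mem_powerset.2 (Finset.subset_univ _), h.2⟩
    rw [← Finset.sum_fiberwise_of_maps_to hmaps
      (fun κ => ((κ i : ℝ) / ∑ j, (κ j : ℝ)) * b κ)]
    refine Finset.sum_congr rfl fun S hS => Finset.sum_congr ?_ fun _ _ => rfl
    have hS' := (Finset.mem_filter.1 hS).2
    ext κ
    simp only [Finset.mem_filter]
    constructor
    · rintro ⟨h1, h2⟩
      exact ⟨⟨h1, by rw [h2]; exact hS'⟩, h2⟩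
    · rintro ⟨⟨h1, -⟩, h3⟩
      exact ⟨h1, h3⟩
  -- combine into single sum over support
  have h7b : (∑ κ ∈ q.support.filter (fun κ => κ.support = {i}), b κ)
      + ∑ κ ∈ q.support.filter (fun κ => 1 < κ.support.card ∧ i ∈ κ.support),
          ((κ i : ℝ) / ∑ j, (κ j : ℝ)) * b κ
      = ∑ κ ∈ q.support, g κ := by
    have hgf : ∀ κ : Fin n →₀ ℕ, ((κ i : ℝ) / ∑ j, (κ j : ℝ)) * b κ = g κ := by
      intro κ
      rw [hg]
      norm_num [Nat.cast_sum]
    rw [← Finset.sum_filter_add_sum_filter_not q.support (fun κ => κ.support = {i}) g]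
    congr 1
    · refine Finset.sum_congr rfl fun κ hκ => ?_
      have hsupp := (Finset.mem_filter.1 hκ).2
      have hzero : ∀ j, j ≠ i → κ j = 0 := by
        intro j hj
        apply Finsupp.notMem_support_iff.1
        rw [hsupp]
        simp [hj]
      have hs : ∑ j, κ j = κ i :=
        Finset.sum_eq_single_of_mem i (Finset.mem_univ i) fun j _ hj => hzero j hj
      have hne : ((κ i : ℕ) : ℝ) ≠ 0 := by
        have : i ∈ κ.support := by rw [hsupp]; exact Finset.mem_singleton_self i
        exact_mod_cast Nat.cast_ne_zero.2 (Finsupp.mem_support_iff.1 this)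
      rw [hg]
      simp only
      rw [hs, div_self hne, one_mul]
    · have hsub2 : (q.support.filter (fun κ => ¬κ.support = {i})).filter
          (fun κ => 1 < κ.support.card ∧ i ∈ κ.support)
          = q.support.filter (fun κ => 1 < κ.support.card ∧ i ∈ κ.support) := by
        ext κ
        simp only [Finset.mem_filter]
        constructor
        · rintro ⟨⟨h1, -⟩, h3⟩; exact ⟨h1, h3⟩
        · rintro ⟨h1, h2⟩
          refine ⟨⟨h1, fun hc => ?_⟩, h2⟩
          rw [hc] at h2
          simp at h2
      rw [← Finset.sum_filter_add_sum_filter_not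
        (q.support.filter (fun κ => ¬κ.support = {i}))
        (fun κ => 1 < κ.support.card ∧ i ∈ κ.support) g, hsub2]
      have hz : ∑ κ ∈ (q.support.filter (fun κ => ¬κ.support = {i})).filter
          (fun κ => ¬(1 < κ.support.card ∧ i ∈ κ.support)), g κ = 0 := by
        refine Finset.sum_eq_zero fun κ hκ => ?_
        have h1 := Finset.mem_filter.1 hκ
        have h2 := Finset.mem_filter.1 h1.1
        by_cases hi : i ∈ κ.support
        · exfalso
          have hcard : ¬1 < κ.support.card := fun hc => h1.2 ⟨hc, hi⟩
          have hpos : 0 < κ.support.card := Finset.card_pos.2 ⟨i, hi⟩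
          have hone : κ.support.card = 1 := by omega
          obtain ⟨a, ha⟩ := Finset.card_eq_one.1 hone
          rw [ha] at hi
          rw [← Finset.mem_singleton.1 hi] at ha
          exact h2.2 ha
        · have : κ i = 0 := Finsupp.notMem_support_iff.1 hi
          rw [hg]
          simp [this]
      rw [hz, add_zero]
      refine Finset.sum_congr rfl fun κ hκ => hgf κ
  -- final chain
  have hgx : σ.eval (∑ j, W j * x j + s) = ∑ κ ∈ q.support, b κ := hq x
  rw [hgx, hgxt, hsub, h7a, h7b, ← hmain]
end

section
/- Let f : ℝⁿ → ℝ be a multivariate polynomial, b ∈ ℝⁿ a baseline point and x ∈ ℝⁿ an input, and let P, Q be a partition of N (P ∪ Q = N, P ∩ Q = ∅). Then the DeepLIFT RevealCancel group contribution of P satisfies (1/2)·[f(x_P) − f(b)] + (1/2)·[f(x) − f(x_Q)] = ∑_{∅ ≠ S ⊆ P} J(S) + (1/2)·∑_{S ⊆ N : S ∩ P ≠ ∅ and S ∩ Q ≠ ∅} J(S). -/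
open Finset

/-- DeepLIFT RevealCancel group contribution.  For a polynomial
`f : ℝⁿ → ℝ` with expansion `q` in powers of `x − b`, and a partition `P, Q` of `N`
(`P ∪ Q = N`, `P ∩ Q = ∅`), the group contribution of `P`,
`(1/2)[f(x_P) − f(b)] + (1/2)[f(x) − f(x_Q)]`, equals
`∑_{∅ ≠ S ⊆ P} J(S) + (1/2)·∑_{S ∩ P ≠ ∅, S ∩ Q ≠ ∅} J(S)`. -/
theorem deeplift_revealcancel_group {n : ℕ} (hn : 1 ≤ n) (f : (Fin n → ℝ) → ℝ)
    (q : MvPolynomial (Fin n) ℝ) (b x : Fin n → ℝ)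
    (hf : ∀ y : Fin n → ℝ,
      f y = ∑ κ ∈ q.support, MvPolynomial.coeff κ q * ∏ i, (y i - b i) ^ κ i)
    (P Q : Finset (Fin n)) (hPQ : P ∪ Q = univ) (hPQdisj : P ∩ Q = ∅) :
    (1 / 2 : ℝ) * (f (fun i => if i ∈ P then x i else b i) - f b)
      + (1 / 2 : ℝ) * (f x - f (fun i => if i ∈ Q then x i else b i))
      = (∑ S ∈ P.powerset.filter (fun S => S.Nonempty),
            ∑ κ ∈ q.support.filter (fun κ => κ.support = S),
              MvPolynomial.coeff κ q * ∏ j, (x j - b j) ^ κ j)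
        + (1 / 2 : ℝ) *
            ∑ S ∈ (univ : Finset (Fin n)).powerset.filter
                (fun S => (S ∩ P).Nonempty ∧ (S ∩ Q).Nonempty),
              ∑ κ ∈ q.support.filter (fun κ => κ.support = S),
                MvPolynomial.coeff κ q * ∏ j, (x j - b j) ^ κ j := by
  set t : (Fin n →₀ ℕ) → ℝ := fun κ => MvPolynomial.coeff κ q * ∏ j, (x j - b j) ^ κ j
    with ht
  have hmask : ∀ T : Finset (Fin n),
      f (fun i => if i ∈ T then x i else b i)
        = ∑ κ ∈ q.support, if κ.support ⊆ T then t κ else 0 := by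
    intro T
    rw [hf]
    refine Finset.sum_congr rfl fun κ _ => ?_
    by_cases h : κ.support ⊆ T
    · rw [if_pos h, ht]
      congr 1
      refine Finset.prod_congr rfl fun i _ => ?_
      by_cases hi : i ∈ T
      · rw [if_pos hi]
      · have hk : κ i = 0 := by
          by_contra hk
          exact hi (h (Finsupp.mem_support_iff.mpr hk))
        rw [hk]; simp
    · rw [if_neg h]
      obtain ⟨i, hi, hiT⟩ := Finset.not_subset.mp h
      refine mul_eq_zero_of_right _ (Finset.prod_eq_zero (Finset.mem_univ i) ?_)
      rw [if_neg hiT]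
      simp [Finsupp.mem_support_iff.mp hi]
  have hb : f b = ∑ κ ∈ q.support, if κ.support ⊆ (∅ : Finset (Fin n)) then t κ else 0 := by
    have h := hmask ∅
    simpa only [Finset.notMem_empty, if_false] using h
  have hx : f x = ∑ κ ∈ q.support, if κ.support ⊆ (univ : Finset (Fin n)) then t κ else 0 := by
    have h := hmask univ
    simpa only [Finset.mem_univ, if_true] using h
  have hPmem : ∀ i : Fin n, i ∉ P → i ∈ Q := by
    intro i hi
    have := Finset.mem_univ i
    rw [← hPQ, Finset.mem_union] at this
    tauto
  have hQmem : ∀ i : Fin n, i ∉ Q → i ∈ P := by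
    intro i hi
    have := Finset.mem_univ i
    rw [← hPQ, Finset.mem_union] at this
    tauto
  rw [hmask P, hmask Q, hb, hx,
    Finset.sum_fiberwise_eq_sum_filter q.support _ (fun κ => κ.support) t,
    Finset.sum_fiberwise_eq_sum_filter q.support _ (fun κ => κ.support) t,
    Finset.sum_filter, Finset.sum_filter,
    ← Finset.sum_sub_distrib, ← Finset.sum_sub_distrib,
    Finset.mul_sum, Finset.mul_sum, Finset.mul_sum,
    ← Finset.sum_add_distrib, ← Finset.sum_add_distrib]
  refine Finset.sum_congr rfl fun κ _ => ?_
  simp only [Finset.mem_filter, Finset.mem_powerset, Finset.subset_univ, true_and, if_true,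
    Finset.subset_empty]
  by_cases hE : κ.support = ∅
  · simp [hE]
  · rw [if_neg hE]
    by_cases hP : κ.support ⊆ P
    · have hQ' : ¬ (κ.support ∩ Q).Nonempty := by
        intro ⟨i, hi⟩
        rw [Finset.mem_inter] at hi
        have : i ∈ P ∩ Q := Finset.mem_inter.mpr ⟨hP hi.1, hi.2⟩
        rw [hPQdisj] at this
        exact absurd this (Finset.notMem_empty i)
      have hQ : ¬ κ.support ⊆ Q := by
        intro h
        refine hE (Finset.eq_empty_of_forall_notMem fun i hi => ?_)
        have : i ∈ P ∩ Q := Finset.mem_inter.mpr ⟨hP hi, h hi⟩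
        rw [hPQdisj] at this
        exact absurd this (Finset.notMem_empty i)
      have hne : κ.support.Nonempty := Finset.nonempty_iff_ne_empty.mpr hE
      rw [if_pos hP, if_neg hQ, if_pos ⟨hP, hne⟩, if_neg (by tauto)]
      ring
    · by_cases hQ : κ.support ⊆ Q
      · have hmix : ¬ ((κ.support ∩ P).Nonempty ∧ (κ.support ∩ Q).Nonempty) := by
          rintro ⟨⟨i, hi⟩, -⟩
          rw [Finset.mem_inter] at hi
          have : i ∈ P ∩ Q := Finset.mem_inter.mpr ⟨hi.2, hQ hi.1⟩
          rw [hPQdisj] at this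
          exact absurd this (Finset.notMem_empty i)
        rw [if_neg hP, if_pos hQ, if_neg (by tauto), if_neg hmix]
        ring
      · obtain ⟨i, hi, hiP⟩ := Finset.not_subset.mp hP
        obtain ⟨j, hj, hjQ⟩ := Finset.not_subset.mp hQ
        have hmix : (κ.support ∩ P).Nonempty ∧ (κ.support ∩ Q).Nonempty :=
          ⟨⟨j, Finset.mem_inter.mpr ⟨hj, hQmem j hjQ⟩⟩,
           ⟨i, Finset.mem_inter.mpr ⟨hi, hPmem i hiP⟩⟩⟩
        rw [if_neg hP, if_neg hQ, if_neg (by tauto), if_pos hmix]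
        ring
end
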